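/- arXiv:2406.18968 — 7 statements merged into one kernel-verified Lean document; each statement's English description precedes it below -/
import Mathlib

section
/- There exist constants C > 0 and x₀ > 0 such that for all x ≥ x₀, | |h(x)| − (2π)^{−7/4}·x^{7/4}·(x² + 19) | ≤ C·x^{−1/4}; equivalently, |h(x)| = x²·(x/(2π))^{7/4}·(1 + 19/x² + O(x^{−4})) as x → +∞. -/
open Complex Real

theorem gammaprod (x : ℝ) (hx : 0 < x) :
    Complex.Gamma (4 + x*I) * Complex.Gamma (4 - x*I)
      = (((9+x^2)*(4+x^2)*(1+x^2)*(Real.pi*x/Real.sinh (Real.pi*x)) : ℝ) : ℂ) := by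
  have hxne : (x : ℂ) ≠ 0 := by exact_mod_cast hx.ne'
  have hne : ∀ a : ℂ, a.im = 0 → a + x*I ≠ 0 ∧ a - x*I ≠ 0 := by
    intro a ha
    constructor <;> · intro hcon
                      rw [Complex.ext_iff] at hcon
                      simp [ha] at hcon
                      exact hx.ne' (by simpa using hcon.2)
  have e1 : Complex.Gamma (4 + x*I) = (3+x*I)*(2+x*I)*(1+x*I)*(x*I)*Complex.Gamma (x*I) := by
    have h3 : (4 + x*I : ℂ) = (3+x*I) + 1 := by ring
    have h2 : (3 + x*I : ℂ) = (2+x*I) + 1 := by ring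
    have h1 : (2 + x*I : ℂ) = (1+x*I) + 1 := by ring
    have h0 : (1 + x*I : ℂ) = (x*I) + 1 := by ring
    rw [h3, Complex.Gamma_add_one _ ((hne 3 (by simp)).1), h2,
      Complex.Gamma_add_one _ ((hne 2 (by simp)).1),
      h1, Complex.Gamma_add_one _ ((hne 1 (by simp)).1), h0,
      Complex.Gamma_add_one _ (by simpa using (hne 0 (by simp)).1)]
    ring
  have e2 : Complex.Gamma (4 - x*I) = (3-x*I)*(2-x*I)*(1-x*I)*Complex.Gamma (1 - x*I) := by
    have h3 : (4 - x*I : ℂ) = (3-x*I) + 1 := by ring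
    have h2 : (3 - x*I : ℂ) = (2-x*I) + 1 := by ring
    have h1 : (2 - x*I : ℂ) = (1-x*I) + 1 := by ring
    rw [h3, Complex.Gamma_add_one _ ((hne 3 (by simp)).2), h2,
      Complex.Gamma_add_one _ ((hne 2 (by simp)).2),
      h1, Complex.Gamma_add_one _ ((hne 1 (by simp)).2)]
    ring
  have erefl : Complex.Gamma (x*I) * Complex.Gamma (1 - x*I)
      = (Real.pi : ℂ) / ((Real.sinh (Real.pi*x) : ℝ) * I) := by
    rw [Complex.Gamma_mul_Gamma_one_sub (x*I)]
    congr 1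
    have h : (Real.pi : ℂ) * (x*I) = ((Real.pi * x : ℝ) : ℂ) * I := by push_cast; ring
    rw [h, Complex.sin_mul_I, ← Complex.ofReal_sinh]
  have hsh : Real.sinh (Real.pi*x) ≠ 0 := by positivity
  have hshC : (Real.sinh (Real.pi*x) : ℂ) ≠ 0 := by exact_mod_cast hsh
  calc Complex.Gamma (4 + x*I) * Complex.Gamma (4 - x*I)
      = ((3+x*I)*(2+x*I)*(1+x*I)*(3-x*I)*(2-x*I)*(1-x*I)*(x*I))
        * (Complex.Gamma (x*I) * Complex.Gamma (1 - x*I)) := by rw [e1, e2]; ring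
    _ = ((3+x*I)*(2+x*I)*(1+x*I)*(3-x*I)*(2-x*I)*(1-x*I)*(x*I))
        * ((Real.pi : ℂ) / ((Real.sinh (Real.pi*x) : ℝ) * I)) := by rw [erefl]
    _ = (((9+x^2)*(4+x^2)*(1+x^2)*(Real.pi*x/Real.sinh (Real.pi*x)) : ℝ) : ℂ) := by
        have hI2 : (I:ℂ)^2 = -1 := Complex.I_sq
        have hI4 : (I:ℂ)^4 = 1 := by rw [show (4:ℕ)=2*2 from rfl, pow_mul, hI2]; ring
        have hI6 : (I:ℂ)^6 = -1 := by rw [show (6:ℕ)=2*3 from rfl, pow_mul, hI2]; ring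
        have hI8 : (I:ℂ)^8 = 1 := by rw [show (8:ℕ)=2*4 from rfl, pow_mul, hI2]; ring
        push_cast
        field_simp
        ring_nf
        rw [hI2, hI4, hI6]
        ring

-- quartic comparison
theorem quartic_cmp {a b : ℝ} (ha : 0 ≤ a) (hb : 0 < b) :
    |a - b| ≤ |a^4 - b^4| / b^3 := by
  rw [le_div_iff₀ (by positivity)]
  have h1 : a^4 - b^4 = (a-b)*(a^3+a^2*b+a*b^2+b^3) := by ring
  rw [h1, abs_mul, _root_.abs_of_nonneg (by positivity : (0:ℝ) ≤ a^3+a^2*b+a*b^2+b^3)]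
  have : b^3 ≤ a^3+a^2*b+a*b^2+b^3 := by nlinarith [pow_nonneg ha 3, mul_nonneg (mul_nonneg ha ha) hb.le, mul_nonneg ha (mul_nonneg hb.le hb.le)]
  exact mul_le_mul_of_nonneg_left this (abs_nonneg _)

theorem exp_lb (x : ℝ) (hx : 9 ≤ x) : x^4 + 1 ≤ Real.exp (Real.pi * x) := by
  have hx0 : (0:ℝ) < x := by linarith
  have h1 : (1 + x/2)^6 ≤ Real.exp (Real.pi * x) := by
    have h2 : Real.exp (x/2) ^ 6 = Real.exp (3*x) := by
      rw [← Real.exp_nat_mul]; norm_num; ring_nf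
    have h3 : (1 + x/2)^6 ≤ Real.exp (x/2)^6 := by
      apply pow_le_pow_left₀ (by positivity)
      linarith [Real.add_one_le_exp (x/2)]
    have h4 : Real.exp (3*x) ≤ Real.exp (Real.pi * x) := by
      apply Real.exp_le_exp.2
      nlinarith [Real.pi_gt_three]
    linarith
  nlinarith [sq_nonneg x, sq_nonneg (x^2 - 81), pow_le_pow_left₀ (by norm_num : (0:ℝ) ≤ 9) hx 4]

theorem coth_sub_one (x : ℝ) (hx : 0 < x) :
    Real.cosh (Real.pi*x/2) / Real.sinh (Real.pi*x/2) - 1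
      = 2 / (Real.exp (Real.pi*x) - 1) := by
  have ht : 0 < Real.pi * x / 2 := by positivity
  set t := Real.pi * x / 2 with htdef
  have hu1 : 1 < Real.exp t := Real.one_lt_exp_iff.2 ht
  have he : Real.exp (Real.pi * x) = Real.exp t * Real.exp t := by
    rw [← Real.exp_add]; congr 1; rw [htdef]; ring
  have hs : 0 < Real.sinh t := Real.sinh_pos_iff.2 ht
  have hne : Real.exp t * Real.exp t - 1 ≠ 0 := by nlinarith
  rw [Real.cosh_eq, Real.sinh_eq, Real.exp_neg] at *
  rw [he]
  have h0 : (0:ℝ) < Real.exp t := Real.exp_pos t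
  have hne2 : Real.exp t ^ 2 - 1 ≠ 0 := by rw [sq]; exact hne
  field_simp
  ring

theorem normSq_gamma (x : ℝ) (hx : 0 < x) :
    Complex.normSq (Complex.Gamma (4 + x*I))
      = (9+x^2)*(4+x^2)*(1+x^2)*(Real.pi*x/Real.sinh (Real.pi*x)) := by
  have h1 : (Complex.normSq (Complex.Gamma (4 + x*I)) : ℂ)
      = Complex.Gamma (4 + x*I) * Complex.Gamma (4 - x*I) := by
    rw [← Complex.mul_conj]
    congr 1
    rw [← Complex.Gamma_conj]
    congr 1
    simp [Complex.ext_iff]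
  rw [gammaprod x hx] at h1
  exact_mod_cast h1

theorem normSq_rhs (x : ℝ) (hx : 0 < x) :
    Complex.normSq ((2 / (2 * Real.pi) ^ 4 : ℝ) * (6 + x * I) * (4 + x * I) *
        (3 + x * I) * (1 + x * I) *
        Complex.exp (-(x * I) * Real.log (2 * Real.pi)) *
        (Real.cosh (Real.pi * x / 2) : ℂ) * Complex.Gamma (4 + x * I))
      = (2/(2*Real.pi)^4)^2 * ((36+x^2)*(16+x^2)*(9+x^2)*(1+x^2))
          * Real.cosh (Real.pi*x/2)^2
          * ((9+x^2)*(4+x^2)*(1+x^2)*(Real.pi*x/Real.sinh (Real.pi*x))) := by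
  have he : Complex.normSq (Complex.exp (-(x * I) * Real.log (2 * Real.pi))) = 1 := by
    rw [Complex.normSq_eq_norm_sq, Complex.norm_exp]
    simp
  have n1 : Complex.normSq ((2 / (2*Real.pi)^4 : ℝ) : ℂ) = (2/(2*Real.pi)^4)^2 := by
    rw [Complex.normSq_ofReal]; ring
  have n6 : Complex.normSq (6 + x*I) = 36 + x^2 := by
    simp [Complex.normSq_apply]; ring
  have n4 : Complex.normSq (4 + x*I) = 16 + x^2 := by
    simp [Complex.normSq_apply]; ring
  have n3 : Complex.normSq (3 + x*I) = 9 + x^2 := by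
    simp [Complex.normSq_apply]; ring
  have n1' : Complex.normSq (1 + x*I) = 1 + x^2 := by
    simp [Complex.normSq_apply]; ring
  have nc : Complex.normSq ((Real.cosh (Real.pi*x/2) : ℝ) : ℂ) = Real.cosh (Real.pi*x/2)^2 := by
    rw [Complex.normSq_ofReal]; ring
  simp only [map_mul]
  rw [n1, n6, n4, n3, n1', he, nc, normSq_gamma x hx]
  ring

theorem Q_bound (x : ℝ) (hx : 1 ≤ x) :
    |(36+x^2)*(16+x^2)*(9+x^2)^2*(4+x^2)*(1+x^2)^2 - x^6*(x^2+19)^4|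
      ≤ 1103616 * x^10 := by
  have h0 : (1:ℝ) ≤ x^10 := one_le_pow₀ hx
  have h2 : x^2 ≤ x^10 := pow_le_pow_right₀ hx (by norm_num)
  have h4 : x^4 ≤ x^10 := pow_le_pow_right₀ hx (by norm_num)
  have h6 : x^6 ≤ x^10 := pow_le_pow_right₀ hx (by norm_num)
  have h8 : x^8 ≤ x^10 := pow_le_pow_right₀ hx (by norm_num)
  have h8' : (0:ℝ) ≤ x^8 := by positivity
  have h10' : (0:ℝ) ≤ x^10 := by positivity
  rw [abs_le]
  constructor <;> nlinarith [h0, h2, h4, h6, h8, h8', h10']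

theorem P_bound (x : ℝ) (hx : 1 ≤ x) :
    (36+x^2)*(16+x^2)*(9+x^2)^2*(4+x^2)*(1+x^2)^2 ≤ 1258000 * x^14 := by
  have h2 : (1:ℝ) ≤ x^2 := one_le_pow₀ hx
  calc (36+x^2)*(16+x^2)*(9+x^2)^2*(4+x^2)*(1+x^2)^2
      ≤ (37*x^2)*(17*x^2)*(10*x^2)^2*(5*x^2)*(2*x^2)^2 := by
        gcongr <;> nlinarith
    _ = 1258000 * x^14 := by ring

set_option maxHeartbeats 1000000 in
theorem abs_h_asymptotic
    (h : ℝ → ℂ) (hc : Continuous h)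
    (hhsq : ∀ x : ℝ, h x ^ 2 =
      (2 / (2 * Real.pi) ^ 4 : ℝ) * (6 + x * Complex.I) * (4 + x * Complex.I) *
        (3 + x * Complex.I) * (1 + x * Complex.I) *
        Complex.exp (-(x * Complex.I) * Real.log (2 * Real.pi)) *
        (Real.cosh (Real.pi * x / 2) : ℂ) * Complex.Gamma (4 + x * Complex.I))
    (hh0 : h 0 = ((3 * Real.sqrt 6 / Real.pi ^ 2 : ℝ) : ℂ)) :
    ∃ C > (0 : ℝ), ∃ x₀ > (0 : ℝ), ∀ x ≥ x₀,
      |‖h x‖ -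
        (2 * Real.pi) ^ (-(7 : ℝ) / 4) * x ^ ((7 : ℝ) / 4) * (x ^ 2 + 19)| ≤
      C * x ^ (-(1 : ℝ) / 4) := by
  refine ⟨3619616, by norm_num, 9, by norm_num, ?_⟩
  intro x hx
  have hx0 : (0:ℝ) < x := by linarith
  have hx1 : (1:ℝ) ≤ x := by linarith
  have hπ : (0:ℝ) < Real.pi := Real.pi_pos
  have h2π : (0:ℝ) < 2*Real.pi := by positivity
  set A := ‖h x‖ with hAdef
  set T : ℝ := (2 * Real.pi) ^ (-(7 : ℝ) / 4) * x ^ ((7 : ℝ) / 4) * (x ^ 2 + 19) with hTdef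
  have hA0 : 0 ≤ A := norm_nonneg _
  have hTpos : 0 < T := by
    apply mul_pos (mul_pos (Real.rpow_pos_of_pos h2π _) (Real.rpow_pos_of_pos hx0 _))
    positivity
  -- value of A^4
  have hshp : 0 < Real.sinh (Real.pi*x/2) := Real.sinh_pos_iff.2 (by positivity)
  have hchp : 0 < Real.cosh (Real.pi*x/2) := Real.cosh_pos _
  have hs2 : Real.sinh (Real.pi*x) = 2*Real.sinh (Real.pi*x/2)*Real.cosh (Real.pi*x/2) := by
    have := Real.sinh_two_mul (Real.pi*x/2)
    rw [show 2*(Real.pi*x/2) = Real.pi*x by ring] at this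
    exact this
  have e1 : A^4 = Complex.normSq (h x ^ 2) := by
    have h5 : Complex.normSq (h x ^ 2) = (‖h x ^ 2‖)^2 := (Complex.sq_norm _).symm
    rw [h5, norm_pow]; ring
  rw [hhsq x, normSq_rhs x hx0] at e1
  have hA4 : A^4 = x * (Real.cosh (Real.pi*x/2)/Real.sinh (Real.pi*x/2))
      * ((36+x^2)*(16+x^2)*(9+x^2)^2*(4+x^2)*(1+x^2)^2) / (2*Real.pi)^7 := by
    rw [e1, hs2]; field_simp
  -- value of T^4 and T^3 bound
  have c1 : ∀ (n : ℕ), ((2*Real.pi) ^ (-(7:ℝ)/4)) ^ n = (2*Real.pi) ^ (-(7:ℝ)/4 * n) := by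
    intro n
    rw [← Real.rpow_natCast ((2*Real.pi) ^ (-(7:ℝ)/4)) n, ← Real.rpow_mul h2π.le]
  have c2 : ∀ (n : ℕ), (x ^ ((7:ℝ)/4)) ^ n = x ^ ((7:ℝ)/4 * n) := by
    intro n
    rw [← Real.rpow_natCast (x ^ ((7:ℝ)/4)) n, ← Real.rpow_mul hx0.le]
  have hT4 : T^4 = x^7*(x^2+19)^4 / (2*Real.pi)^7 := by
    rw [hTdef, mul_pow, mul_pow, c1 4, c2 4,
      show (-(7:ℝ)/4 * ((4:ℕ):ℝ)) = -((7:ℕ):ℝ) by norm_num,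
      show ((7:ℝ)/4 * ((4:ℕ):ℝ)) = ((7:ℕ):ℝ) by norm_num,
      Real.rpow_neg h2π.le, Real.rpow_natCast, Real.rpow_natCast]
    ring
  have hT3 : (2*Real.pi) ^ (-(21:ℝ)/4) * x ^ ((45:ℝ)/4) ≤ T^3 := by
    have e31 : T^3 = (2*Real.pi) ^ (-(21:ℝ)/4) * (x ^ ((21:ℝ)/4) * (x^2+19)^3) := by
      rw [hTdef, mul_pow, mul_pow, c1 3, c2 3,
        show (-(7:ℝ)/4 * ((3:ℕ):ℝ)) = -(21:ℝ)/4 by norm_num,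
        show ((7:ℝ)/4 * ((3:ℕ):ℝ)) = (21:ℝ)/4 by norm_num]
      ring
    have h6 : x^6 ≤ (x^2+19)^3 := by nlinarith [sq_nonneg x, sq_nonneg (x^2), pow_pos hx0 2]
    have hx45 : x ^ ((45:ℝ)/4) = x ^ ((21:ℝ)/4) * x^6 := by
      rw [show (x:ℝ)^6 = x ^ ((6:ℕ):ℝ) by rw [Real.rpow_natCast], ← Real.rpow_add hx0]
      norm_num
    rw [e31, hx45]
    apply mul_le_mul_of_nonneg_left _ (Real.rpow_nonneg h2π.le _)
    exact mul_le_mul_of_nonneg_left h6 (Real.rpow_nonneg hx0.le _)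
  -- exp bound and coth bound
  have hexp := exp_lb x hx
  have hD := coth_sub_one x hx0
  have hexp1 : x^4 ≤ Real.exp (Real.pi*x) - 1 := by linarith
  have hx4 : (0:ℝ) < x^4 := by positivity
  have hDle : Real.cosh (Real.pi*x/2)/Real.sinh (Real.pi*x/2) - 1 ≤ 2/x^4 := by
    rw [hD]
    exact div_le_div_of_nonneg_left (by norm_num) hx4 hexp1
  have hDpos : 0 ≤ Real.cosh (Real.pi*x/2)/Real.sinh (Real.pi*x/2) - 1 := by
    rw [hD]
    have h9 : (0:ℝ) < Real.exp (Real.pi*x) - 1 := by nlinarith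
    positivity
  -- key bound on |A^4 - T^4|
  have hQ := Q_bound x hx1
  have hPb := P_bound x hx1
  have hPpos : (0:ℝ) ≤ (36+x^2)*(16+x^2)*(9+x^2)^2*(4+x^2)*(1+x^2)^2 := by positivity
  have hDP : (Real.cosh (Real.pi*x/2)/Real.sinh (Real.pi*x/2) - 1)
      * ((36+x^2)*(16+x^2)*(9+x^2)^2*(4+x^2)*(1+x^2)^2) ≤ 2516000 * x^10 := by
    have h7 := mul_le_mul hDle hPb hPpos (by positivity)
    calc (Real.cosh (Real.pi*x/2)/Real.sinh (Real.pi*x/2) - 1)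
        * ((36+x^2)*(16+x^2)*(9+x^2)^2*(4+x^2)*(1+x^2)^2)
        ≤ 2/x^4 * (1258000 * x^14) := h7
      _ = 2516000 * x^10 := by field_simp; ring
  have hkey : |A^4 - T^4| ≤ 3619616 * x^11 / (2*Real.pi)^7 := by
    rw [hA4, hT4]
    have heq : x * (Real.cosh (Real.pi*x/2)/Real.sinh (Real.pi*x/2))
        * ((36+x^2)*(16+x^2)*(9+x^2)^2*(4+x^2)*(1+x^2)^2) / (2*Real.pi)^7
        - x^7*(x^2+19)^4 / (2*Real.pi)^7
      = x * ((Real.cosh (Real.pi*x/2)/Real.sinh (Real.pi*x/2) - 1)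
          * ((36+x^2)*(16+x^2)*(9+x^2)^2*(4+x^2)*(1+x^2)^2)
          + ((36+x^2)*(16+x^2)*(9+x^2)^2*(4+x^2)*(1+x^2)^2 - x^6*(x^2+19)^4))
        / (2*Real.pi)^7 := by ring
    rw [heq, abs_div, abs_of_pos (by positivity : (0:ℝ) < (2*Real.pi)^7), abs_mul,
      abs_of_pos hx0]
    rw [div_le_div_iff_of_pos_right (by positivity : (0:ℝ) < (2*Real.pi)^7)]
    have habs : |(Real.cosh (Real.pi*x/2)/Real.sinh (Real.pi*x/2) - 1)
          * ((36+x^2)*(16+x^2)*(9+x^2)^2*(4+x^2)*(1+x^2)^2)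
          + ((36+x^2)*(16+x^2)*(9+x^2)^2*(4+x^2)*(1+x^2)^2 - x^6*(x^2+19)^4)|
        ≤ 3619616 * x^10 := by
      refine le_trans (abs_add_le _ _) ?_
      rw [_root_.abs_of_nonneg (mul_nonneg hDpos hPpos)]
      linarith
    calc x * |_| ≤ x * (3619616 * x^10) := mul_le_mul_of_nonneg_left habs hx0.le
      _ = 3619616 * x^11 := by ring
  -- final chain
  have hmain := quartic_cmp hA0 hTpos
  have hchain : |A^4 - T^4| / T^3 ≤ (3619616 * x^11 / (2*Real.pi)^7)
      / ((2*Real.pi) ^ (-(21:ℝ)/4) * x ^ ((45:ℝ)/4)) := by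
    apply div_le_div₀ (by positivity) hkey _ hT3
    positivity
  have hfinal : (3619616 * x^11 / (2*Real.pi)^7)
      / ((2*Real.pi) ^ (-(21:ℝ)/4) * x ^ ((45:ℝ)/4)) ≤ 3619616 * x ^ (-(1:ℝ)/4) := by
    rw [div_le_iff₀ (by positivity)]
    have hx11 : x ^ (-(1:ℝ)/4) * x ^ ((45:ℝ)/4) = x ^ 11 := by
      rw [← Real.rpow_add hx0, show (-(1:ℝ)/4 + (45:ℝ)/4) = ((11:ℕ):ℝ) by norm_num,
        Real.rpow_natCast]
    have hpow : ((2*Real.pi)^7 : ℝ)⁻¹ ≤ (2*Real.pi) ^ (-(21:ℝ)/4) := by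
      rw [show ((2*Real.pi)^7 : ℝ) = (2*Real.pi) ^ ((7:ℕ):ℝ) by rw [Real.rpow_natCast],
        ← Real.rpow_neg h2π.le]
      exact (Real.rpow_le_rpow_left_iff (by nlinarith [Real.pi_gt_three])).2 (by norm_num)
    calc 3619616 * x^11 / (2*Real.pi)^7 = 3619616 * x^11 * ((2*Real.pi)^7)⁻¹ := by ring
      _ ≤ 3619616 * x^11 * (2*Real.pi) ^ (-(21:ℝ)/4) := by
          apply mul_le_mul_of_nonneg_left hpow (by positivity)
      _ = 3619616 * x ^ (-(1:ℝ)/4) * ((2*Real.pi) ^ (-(21:ℝ)/4) * x ^ ((45:ℝ)/4)) := by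
          rw [← hx11]; ring
  calc |A - T| ≤ |A^4 - T^4| / T^3 := hmain
    _ ≤ _ := hchain
    _ ≤ 3619616 * x ^ (-(1:ℝ)/4) := hfinal
end

section
/- For all real numbers a and x with x > a ≥ 1, the upper incomplete Gamma function satisfies Γ(a,x) := ∫_x^∞ v^{a−1}·e^{−v} dv ≤ a·e^{−x}·x^{a−1}. -/
open Real MeasureTheory

theorem incomplete_gamma_bound (a x : ℝ) (ha : 1 ≤ a) (hx : a < x) :
    ∫ v in Set.Ioi x, v ^ (a - 1) * Real.exp (-v) ≤ a * Real.exp (-x) * x ^ (a - 1) := by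
  have hx0 : 0 < x := lt_of_lt_of_le (by linarith) hx.le
  have hden : 0 < x - a + 1 := by linarith
  set c : ℝ := x / (x - a + 1) with hc
  have hc1 : 1 ≤ c := by
    rw [hc, le_div_iff₀ hden]; nlinarith
  have hc0 : 0 < c := lt_of_lt_of_le one_pos hc1
  have hca : c ≤ a := by
    rw [hc, div_le_iff₀ hden]; nlinarith
  -- the antiderivative
  set g : ℝ → ℝ := fun v => -(c * (v ^ (a - 1) * Real.exp (-v))) with hg
  set g' : ℝ → ℝ := fun v => c * (v ^ (a - 1) * Real.exp (-v)
      - (a - 1) * v ^ (a - 2) * Real.exp (-v)) with hg'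
  have hderiv : ∀ v ∈ Set.Ici x, HasDerivAt g (g' v) v := by
    intro v hv
    have hv0 : 0 < v := lt_of_lt_of_le hx0 hv
    have h1 : HasDerivAt (fun v : ℝ => v ^ (a - 1)) ((a - 1) * v ^ (a - 2)) v := by
      have := Real.hasDerivAt_rpow_const (x := v) (p := a - 1) (Or.inl hv0.ne')
      convert this using 2; ring
    have h2 : HasDerivAt (fun v : ℝ => Real.exp (-v)) (-Real.exp (-v)) v := by
      simpa using ((hasDerivAt_neg v).exp)
    have h3 := (h1.mul h2).const_mul c
    have : HasDerivAt (fun y => -(c * (y ^ (a - 1) * Real.exp (-y))))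
        (-(c * ((a - 1) * v ^ (a - 2) * Real.exp (-v) + v ^ (a - 1) * -Real.exp (-v)))) v := h3.neg
    convert this using 1
    simp only [hg']
    ring
  have hpos : ∀ v ∈ Set.Ioi x, 0 ≤ g' v := by
    intro v hv
    have hv0 : 0 < v := lt_of_le_of_lt hx0.le hv
    have hrw : v ^ (a - 1) = v ^ (a - 2) * v := by
      rw [← Real.rpow_add_one hv0.ne' (a - 2)]; congr 1; ring
    have hv2 : (0:ℝ) ≤ v ^ (a - 2) := Real.rpow_nonneg hv0.le _
    have he : (0:ℝ) < Real.exp (-v) := Real.exp_pos _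
    simp only [hg', hrw]
    have : (0:ℝ) ≤ v ^ (a - 2) * (v - (a - 1)) := by
      apply mul_nonneg hv2; have := hv.out; linarith
    calc (0:ℝ) ≤ c * (v ^ (a - 2) * (v - (a - 1)) * Real.exp (-v)) := by positivity
      _ = c * (v ^ (a - 2) * v * Real.exp (-v) - (a - 1) * v ^ (a - 2) * Real.exp (-v)) := by ring
  have htend : Filter.Tendsto g Filter.atTop (nhds 0) := by
    have h := tendsto_rpow_mul_exp_neg_mul_atTop_nhds_zero (a - 1) 1 one_pos
    have h2 : Filter.Tendsto (fun v : ℝ => v ^ (a - 1) * Real.exp (-v))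
        Filter.atTop (nhds 0) := by
      simpa using h
    have := (h2.const_mul c).neg
    simpa using this
  have hint_g' : IntegrableOn g' (Set.Ioi x) :=
    integrableOn_Ioi_deriv_of_nonneg' hderiv hpos htend
  have hval : ∫ v in Set.Ioi x, g' v = c * (x ^ (a - 1) * Real.exp (-x)) := by
    rw [integral_Ioi_of_hasDerivAt_of_nonneg' hderiv hpos htend]
    simp [hg]
  -- pointwise bound f ≤ g'
  have hbound : ∀ v ∈ Set.Ioi x, v ^ (a - 1) * Real.exp (-v) ≤ g' v := by
    intro v hv
    have hvx : x < v := hv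
    have hv0 : 0 < v := lt_trans hx0 hvx
    have hrw : v ^ (a - 1) = v ^ (a - 2) * v := by
      rw [← Real.rpow_add_one hv0.ne' (a - 2)]; congr 1; ring
    have hv2 : (0:ℝ) ≤ v ^ (a - 2) := Real.rpow_nonneg hv0.le _
    have he : (0:ℝ) < Real.exp (-v) := Real.exp_pos _
    simp only [hg', hrw]
    rw [← sub_nonneg]
    have key : 0 ≤ (c - 1) * v - c * (a - 1) := by
      have h1 : (c - 1) * x = c * (a - 1) := by
        rw [hc]; field_simp; ring
      have h2 : (c - 1) * x ≤ (c - 1) * v := by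
        apply mul_le_mul_of_nonneg_left hvx.le; linarith
      linarith
    calc (0:ℝ) ≤ v ^ (a - 2) * ((c - 1) * v - c * (a - 1)) * Real.exp (-v) := by positivity
      _ = c * (v ^ (a - 2) * v * Real.exp (-v) - (a - 1) * v ^ (a - 2) * Real.exp (-v))
          - v ^ (a - 2) * v * Real.exp (-v) := by ring
  have hf_nonneg : ∀ v ∈ Set.Ioi x, 0 ≤ v ^ (a - 1) * Real.exp (-v) := by
    intro v hv
    have hv0 : 0 < v := lt_trans hx0 hv
    positivity
  have hf_meas : AEStronglyMeasurable (fun v : ℝ => v ^ (a - 1) * Real.exp (-v))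
      (volume.restrict (Set.Ioi x)) :=
by
    apply ContinuousOn.aestronglyMeasurable ?_ measurableSet_Ioi
    apply ContinuousOn.mul
    · exact ContinuousOn.rpow_const continuousOn_id
        (fun v hv => Or.inl (ne_of_gt (lt_trans hx0 hv)))
    · exact (Real.continuous_exp.comp continuous_neg).continuousOn
  have hint_f : IntegrableOn (fun v : ℝ => v ^ (a - 1) * Real.exp (-v)) (Set.Ioi x) := by
    apply hint_g'.mono' hf_meas
    filter_upwards [ae_restrict_mem measurableSet_Ioi] with v hv
    rw [Real.norm_eq_abs, abs_of_nonneg (hf_nonneg v hv)]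
    exact hbound v hv
  calc ∫ v in Set.Ioi x, v ^ (a - 1) * Real.exp (-v)
      ≤ ∫ v in Set.Ioi x, g' v := by
        apply setIntegral_mono_on hint_f hint_g' measurableSet_Ioi hbound
    _ = c * (x ^ (a - 1) * Real.exp (-x)) := hval
    _ ≤ a * Real.exp (-x) * x ^ (a - 1) := by
        have hxp : (0:ℝ) ≤ x ^ (a - 1) := Real.rpow_nonneg hx0.le _
        have he : (0:ℝ) < Real.exp (-x) := Real.exp_pos _
        nlinarith [mul_nonneg hxp he.le]
end

section
/- For every nonnegative integer n, the polynomial Bₙ has degree n, and for every real y the n-th derivative of y ↦ 1/cosh(y) equals (−1)ⁿ·2·e^{−y}·Bₙ(−e^{−2y}) / (e^{−2y}+1)^{n+1}. -/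
open Polynomial

/-- The type B Eulerian polynomials: `B₀ = 1`,
`Bₙ = 2x(1−x)·B′ₙ₋₁ + (1+(2n−1)x)·Bₙ₋₁` for `n ≥ 1`. -/
noncomputable def eulerB : ℕ → Polynomial ℝ
  | 0 => 1
  | n + 1 => 2 * X * (1 - X) * (derivative (eulerB n)) +
      (1 + C ((2 * (n + 1 : ℕ) - 1 : ℕ) : ℝ) * X) * eulerB n

lemma eulerB_cast (n : ℕ) : ((2 * (n + 1) - 1 : ℕ) : ℝ) = 2 * n + 1 := by
  have : (2 * (n+1) - 1 : ℕ) = 2*n+1 := by omega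
  rw [this]; push_cast; ring

lemma eulerB_succ (n : ℕ) {c : ℝ} (h : c = 2*(n:ℝ)+1) : eulerB (n+1) =
    2*(X*derivative (eulerB n)) - 2*(X^2*derivative (eulerB n))
      + (eulerB n + C c * (X * eulerB n)) := by
  rw [eulerB, eulerB_cast, ← h]; ring

lemma eulerB_one : eulerB 1 = 1 + X := by
  rw [show (1:ℕ) = 0 + 1 from rfl, eulerB_succ 0 (c := 1) (by norm_num)]
  simp [eulerB]

lemma eulerB_deg : ∀ n : ℕ, (eulerB n).natDegree ≤ n ∧ (eulerB n).coeff n = 1 := by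
  intro n
  induction n with
  | zero => simp [eulerB]
  | succ n ih =>
    obtain ⟨hd, hc⟩ := ih
    match n, hd, hc with
    | 0, _, _ =>
      rw [eulerB_one]
      constructor
      · apply le_trans (natDegree_add_le _ _); simp
      · simp [coeff_one]
    | m+1, hd, hc =>
      set n := m + 1 with hn
      obtain ⟨c, hcc⟩ : ∃ c : ℝ, c = 2*(n:ℝ)+1 := ⟨_, rfl⟩
      have key := eulerB_succ n hcc
      have hd' : (derivative (eulerB n)).natDegree ≤ m :=
        le_trans (natDegree_derivative_le _) (by omega)
      have hXd : (X * derivative (eulerB n)).natDegree ≤ n :=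
        le_trans natDegree_mul_le (by simp; omega)
      have hX2d : (X^2 * derivative (eulerB n)).natDegree ≤ n + 1 :=
        le_trans natDegree_mul_le (by simp; omega)
      have hXe : (X * eulerB n).natDegree ≤ n + 1 :=
        le_trans natDegree_mul_le (by simp; omega)
      constructor
      · rw [key]
        apply le_trans (natDegree_add_le _ _)
        apply max_le
        · apply le_trans (natDegree_sub_le _ _)
          apply max_le
          · exact le_trans natDegree_mul_le (by simpa using hXd.trans (by omega))
          · exact le_trans natDegree_mul_le (by simpa using hX2d)
        · apply le_trans (natDegree_add_le _ _)
          apply max_le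
          · omega
          · exact le_trans natDegree_mul_le (by simpa [natDegree_C] using hXe)
      · rw [key]
        have h1 : (X * derivative (eulerB n)).coeff (n+1) = 0 := by
          rw [coeff_X_mul]
          exact coeff_eq_zero_of_natDegree_lt (by omega)
        have h2 : (X^2 * derivative (eulerB n)).coeff (n+1) = (n : ℝ) := by
          have : n + 1 = m + 2 := by omega
          rw [this, coeff_X_pow_mul, coeff_derivative]
          rw [show m + 1 = n from rfl, hc]
          push_cast; rw [hn]; push_cast; ring
        have h3 : (eulerB n).coeff (n+1) = 0 :=
          coeff_eq_zero_of_natDegree_lt (by omega)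
        have h4 : (X * eulerB n).coeff (n+1) = 1 := by rw [coeff_X_mul, hc]
        simp only [coeff_add, coeff_sub, coeff_C_mul, coeff_ofNat_mul, h1, h2, h3, h4, hcc]
        push_cast
        ring

lemma eulerB_degree (n : ℕ) : (eulerB n).degree = n := by
  obtain ⟨hd, hc⟩ := eulerB_deg n
  exact degree_eq_of_le_of_coeff_ne_zero
    (le_trans degree_le_natDegree (by exact_mod_cast hd)) (by rw [hc]; norm_num)

lemma keyDeriv (n : ℕ) (P : Polynomial ℝ) (y : ℝ) :
    HasDerivAt (fun y : ℝ => (-1:ℝ)^n * 2 * Real.exp (-y) * P.eval (-Real.exp (-2*y)) /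
        (Real.exp (-2*y)+1)^(n+1))
      ((-1:ℝ)^(n+1) * 2 * Real.exp (-y) *
        (2*(-Real.exp (-2*y))*(1-(-Real.exp (-2*y)))*(derivative P).eval (-Real.exp (-2*y))
          + (1+(2*(n:ℝ)+1)*(-Real.exp (-2*y)))*P.eval (-Real.exp (-2*y)))
        / (Real.exp (-2*y)+1)^(n+2)) y := by
  have h1 : HasDerivAt (fun y : ℝ => -2*y) (-2) y := by
    simpa using (hasDerivAt_id y).const_mul (-2)
  have hu : HasDerivAt (fun y : ℝ => Real.exp (-2*y)) (Real.exp (-2*y) * (-2)) y := h1.exp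
  have h2 : HasDerivAt (fun y : ℝ => -y) (-1) y := by
    simpa using (hasDerivAt_id y).fun_neg
  have hE : HasDerivAt (fun y : ℝ => Real.exp (-y)) (Real.exp (-y) * (-1)) y := h2.exp
  have hinner : HasDerivAt (fun y : ℝ => -Real.exp (-2*y)) (-(Real.exp (-2*y) * (-2))) y := hu.neg
  have hP : HasDerivAt (fun y : ℝ => P.eval (-Real.exp (-2*y)))
      ((derivative P).eval (-Real.exp (-2*y)) * (-(Real.exp (-2*y) * (-2)))) y :=
    by have := (P.hasDerivAt (-Real.exp (-2*y))).comp y hinner; exact this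
  have hN : HasDerivAt (fun y : ℝ => (-1:ℝ)^n * 2 * Real.exp (-y) * P.eval (-Real.exp (-2*y)))
      (((-1:ℝ)^n * 2 * (Real.exp (-y) * (-1))) * P.eval (-Real.exp (-2*y)) +
        ((-1:ℝ)^n * 2 * Real.exp (-y)) * ((derivative P).eval (-Real.exp (-2*y)) * (-(Real.exp (-2*y) * (-2))))) y := by
    exact ((hE.const_mul ((-1:ℝ)^n * 2)).mul hP).congr_deriv (by ring)
  have hD : HasDerivAt (fun y : ℝ => (Real.exp (-2*y)+1)^(n+1))
      ((n+1 : ℕ) * (Real.exp (-2*y)+1)^n * (Real.exp (-2*y) * (-2))) y := by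
    simpa using (hu.add_const 1).fun_pow (n+1)
  have hne : (Real.exp (-2*y)+1)^(n+1) ≠ 0 := by positivity
  have := hN.fun_div hD hne
  refine this.congr_deriv ?_
  have hpos : (0:ℝ) < Real.exp (-2*y) + 1 := by positivity
  push_cast
  field_simp
  ring

theorem eulerB_degree_and_deriv_cosh (n : ℕ) :
    (eulerB n).degree = (n : ℕ) ∧
    ∀ y : ℝ, iteratedDeriv n (fun y : ℝ => 1 / Real.cosh y) y =
      (-1) ^ n * 2 * Real.exp (-y) * (eulerB n).eval (-Real.exp (-2 * y)) /
        (Real.exp (-2 * y) + 1) ^ (n + 1) := by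
  refine ⟨eulerB_degree n, ?_⟩
  induction n with
  | zero =>
    intro y
    simp only [iteratedDeriv_zero, pow_zero, one_mul]
    show 1 / Real.cosh y = _
    simp only [eulerB, eval_one, mul_one]
    rw [Real.cosh_eq]
    rw [show (-2*y) = (-y) + (-y) by ring, Real.exp_add, Real.exp_neg]
    have h := Real.exp_ne_zero y
    field_simp
    simp only [zero_add, pow_one]
    field_simp
    ring
  | succ n ih =>
    intro y
    rw [iteratedDeriv_succ]
    have hfun : iteratedDeriv n (fun y : ℝ => 1/Real.cosh y) =
        fun y : ℝ => (-1:ℝ)^n * 2 * Real.exp (-y) * (eulerB n).eval (-Real.exp (-2*y)) /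
          (Real.exp (-2*y)+1)^(n+1) := funext ih
    rw [hfun, (keyDeriv n (eulerB n) y).deriv]
    rw [show eulerB (n+1) = 2 * X * (1 - X) * (derivative (eulerB n)) +
        (1 + C ((2 * (n + 1 : ℕ) - 1 : ℕ) : ℝ) * X) * eulerB n from rfl]
    simp only [eval_add, eval_mul, eval_sub, eval_one, eval_X, eval_C, eval_ofNat, eulerB_cast]
end

section
/- For every nonnegative integer n and every real number α, ∫_{−∞}^{∞} e^{iαx}·xⁿ / (7·cosh(πx/7)) dx = (7i/2)ⁿ · 2·e^{−y}·Bₙ(−e^{−2y}) / (1+e^{−2y})^{n+1}, where y = 7α/2; in particular the integral is absolutely convergent. -/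
open Polynomial Complex Real MeasureTheory

open Set

noncomputable def fI (n : ℕ) (α : ℝ) (x : ℝ) : ℂ :=
  Complex.exp (Complex.I * α * x) * (x : ℂ) ^ n / (7 * (Real.cosh (Real.pi * x / 7) : ℂ))

lemma cosh_ge (t : ℝ) : Real.exp |t| / 2 ≤ Real.cosh t := by
  rw [Real.cosh_eq]
  rcases abs_cases t with ⟨h, _⟩ | ⟨h, _⟩ <;> rw [h] <;>
    nlinarith [Real.exp_pos t, Real.exp_pos (-t)]

lemma integrable_pow_exp_decay (n : ℕ) {b : ℝ} (hb : 0 < b) :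
    Integrable (fun x : ℝ => |x| ^ n * Real.exp (-b * |x|)) := by
  have h1 : IntegrableOn (fun x : ℝ => |x| ^ n * Real.exp (-b * |x|)) (Ioi 0) := by
    have h := integrableOn_rpow_mul_exp_neg_mul_rpow (p := 1) (s := n)
      (by exact_mod_cast neg_one_lt_zero.trans_le (Nat.cast_nonneg n)) zero_lt_one hb
    apply h.congr_fun _ measurableSet_Ioi
    intro x hx
    simp only [Set.mem_Ioi] at hx
    simp [abs_of_pos hx, Real.rpow_natCast, Real.rpow_one]
  have h2 : IntegrableOn (fun x : ℝ => |x| ^ n * Real.exp (-b * |x|)) (Iic 0) := by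
    rw [← Measure.map_neg_eq_self (volume : Measure ℝ)]
    have m : MeasurableEmbedding fun x : ℝ => -x := (Homeomorph.neg ℝ).measurableEmbedding
    rw [m.integrableOn_map_iff]
    simp_rw [Function.comp_def, abs_neg, neg_preimage, neg_Iic, neg_zero]
    exact Iff.mpr integrableOn_Ici_iff_integrableOn_Ioi h1
  rw [← integrableOn_univ, ← Iic_union_Ioi (a := (0:ℝ))]
  exact h2.union h1

lemma norm_integrand (n : ℕ) (α : ℝ) (x : ℝ) :
    ‖Complex.exp (Complex.I * α * x) * (x : ℂ) ^ n /
        (7 * (Real.cosh (Real.pi * x / 7) : ℂ))‖ =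
      |x| ^ n / (7 * Real.cosh (Real.pi * x / 7)) := by
  rw [norm_div, norm_mul, norm_mul, norm_pow]
  have h1 : ‖Complex.exp (Complex.I * α * x)‖ = 1 := by
    rw [Complex.norm_exp]
    norm_num [Complex.mul_re, Complex.mul_im]
  have h2 : ‖(Real.cosh (Real.pi * x / 7) : ℂ)‖ = Real.cosh (Real.pi * x / 7) := by
    rw [Complex.norm_real, Real.norm_eq_abs, abs_of_pos (Real.cosh_pos _)]
  rw [h1, h2, one_mul]
  congr 1
  · rw [Complex.norm_real, Real.norm_eq_abs]
  · congr 1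
    norm_num

lemma integrable_main (n : ℕ) (α : ℝ) :
    Integrable (fun x : ℝ => Complex.exp (Complex.I * α * x) * (x : ℂ) ^ n /
        (7 * (Real.cosh (Real.pi * x / 7) : ℂ))) := by
  have hcont : Continuous (fun x : ℝ => Complex.exp (Complex.I * α * x) * (x : ℂ) ^ n /
      (7 * (Real.cosh (Real.pi * x / 7) : ℂ))) := by
    apply Continuous.div
    · exact ((Complex.continuous_exp.comp (by continuity)).mul (by continuity))
    · continuity
    · intro x
      have : (0:ℝ) < Real.cosh (Real.pi * x / 7) := Real.cosh_pos _
      intro h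
      rw [mul_eq_zero] at h
      rcases h with h | h
      · norm_num at h
      · exact absurd (Complex.ofReal_eq_zero.mp h) (ne_of_gt this)
  refine (integrable_pow_exp_decay n (b := Real.pi / 7) (by positivity)).mono'
    hcont.aestronglyMeasurable ?_
  filter_upwards with x
  rw [norm_integrand]
  have hc : Real.exp (Real.pi / 7 * |x|) / 2 ≤ Real.cosh (Real.pi * x / 7) := by
    have := cosh_ge (Real.pi * x / 7)
    have habs : |Real.pi * x / 7| = Real.pi / 7 * |x| := by
      rw [abs_div, abs_mul, abs_of_pos Real.pi_pos]
      ring_nf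
    rwa [habs] at this
  have h7 : (0:ℝ) < 7 * Real.cosh (Real.pi * x / 7) := by positivity
  rw [div_le_iff₀ h7]
  have : Real.exp (-(Real.pi/7) * |x|) * Real.exp (Real.pi/7 * |x|) = 1 := by
    rw [← Real.exp_add]; ring_nf; exact Real.exp_zero
  nlinarith [pow_nonneg (abs_nonneg x) n, Real.exp_pos (-(Real.pi/7) * |x|),
    mul_le_mul_of_nonneg_left hc (mul_nonneg (pow_nonneg (abs_nonneg x) n) (Real.exp_pos (-(Real.pi/7)*|x|)).le)]

noncomputable def gB (n : ℕ) (y : ℝ) : ℝ :=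
  2 * Real.exp (-y) * (eulerB n).eval (-Real.exp (-(2*y))) / (1 + Real.exp (-(2*y))) ^ (n+1)

lemma hasDerivAt_gB (n : ℕ) (y : ℝ) : HasDerivAt (gB n) (-(gB (n+1) y)) y := by
  have hE : HasDerivAt (fun y : ℝ => Real.exp (-y)) (-Real.exp (-y)) y := by
    simpa using (hasDerivAt_neg y).exp
  have hE2 : HasDerivAt (fun y : ℝ => Real.exp (-(2*y))) (-2 * Real.exp (-(2*y))) y := by
    have : HasDerivAt (fun y : ℝ => -(2*y)) (-2) y := by
      simpa using ((hasDerivAt_id y).const_mul (2:ℝ)).fun_neg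
    convert this.exp using 1; ring
  have hu : HasDerivAt (fun y : ℝ => -Real.exp (-(2*y))) (2 * Real.exp (-(2*y))) y := by
    simpa using hE2.fun_neg
  have hP : HasDerivAt (fun y : ℝ => (eulerB n).eval (-Real.exp (-(2*y))))
      ((derivative (eulerB n)).eval (-Real.exp (-(2*y))) * (2 * Real.exp (-(2*y)))) y :=
    (Polynomial.hasDerivAt (eulerB n) _).comp y hu
  have hN : HasDerivAt (fun y : ℝ => 2 * Real.exp (-y) * (eulerB n).eval (-Real.exp (-(2*y))))
      (2 * (-Real.exp (-y)) * (eulerB n).eval (-Real.exp (-(2*y)))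
        + 2 * Real.exp (-y) * ((derivative (eulerB n)).eval (-Real.exp (-(2*y)))
          * (2 * Real.exp (-(2*y))))) y := by
    simpa [mul_comm, mul_assoc, mul_left_comm] using (hE.const_mul (2:ℝ)).fun_mul hP
  have hDbase : HasDerivAt (fun y : ℝ => 1 + Real.exp (-(2*y))) (-2 * Real.exp (-(2*y))) y := by
    simpa using (hasDerivAt_const y (1:ℝ)).fun_add hE2
  have hD : HasDerivAt (fun y : ℝ => (1 + Real.exp (-(2*y))) ^ (n+1))
      ((n+1) * (1 + Real.exp (-(2*y))) ^ n * (-2 * Real.exp (-(2*y)))) y := by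
    simpa using hDbase.fun_pow (n+1)
  have hDne : (1 + Real.exp (-(2*y))) ^ (n+1) ≠ 0 := by positivity
  have h := hN.fun_div hD hDne
  refine h.congr_deriv (Eq.symm ?_)
  have hne : (1 + Real.exp (-(2*y))) ≠ 0 := by positivity
  have hcast : ((2 * (n + 1) - 1 : ℕ) : ℝ) = 2 * (n:ℝ) + 1 := by
    have : (2 * (n + 1) - 1 : ℕ) = 2 * n + 1 := by omega
    rw [this]; push_cast; ring
  set E := Real.exp (-y) with hEdef
  have hsq : Real.exp (-(2*y)) = E^2 := by
    rw [hEdef, sq, ← Real.exp_add]; congr 1; ring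
  rw [gB]
  show _ = _
  simp only [eulerB, Polynomial.eval_add, Polynomial.eval_mul, Polynomial.eval_ofNat,
    Polynomial.eval_X, Polynomial.eval_sub, Polynomial.eval_one, Polynomial.eval_C, hcast, hsq]
  field_simp
  ring

noncomputable def g1 (s : ℂ) (u : ℝ) : ℂ := Complex.exp ((s-1) * Real.log u) / (1+u)

lemma theta_image : (fun u : ℝ => u/(1+u)) '' Ioi 0 = Ioo 0 1 := by
  ext x
  constructor
  · rintro ⟨u, hu, rfl⟩
    simp only [mem_Ioi] at hu
    have h1 : (0:ℝ) < 1 + u := by linarith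
    constructor
    · positivity
    · rw [div_lt_one h1]; linarith
  · rintro ⟨hx0, hx1⟩
    refine ⟨x / (1-x), ?_, ?_⟩
    · simp only [mem_Ioi]; exact div_pos hx0 (by linarith)
    · have h1 : (1:ℝ) - x ≠ 0 := by linarith
      field_simp
      ring

lemma theta_inj : InjOn (fun u : ℝ => u/(1+u)) (Ioi 0) := by
  intro a ha b hb h
  simp only [mem_Ioi] at ha hb
  have h1 : (1:ℝ) + a ≠ 0 := by linarith
  have h2 : (1:ℝ) + b ≠ 0 := by linarith
  field_simp at h
  linarith

lemma B5 (s : ℂ) : Complex.betaIntegral s (1-s) = ∫ u in Ioi (0:ℝ), g1 s u := by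
  rw [Complex.betaIntegral, intervalIntegral.integral_of_le zero_le_one,
    MeasureTheory.integral_Ioc_eq_integral_Ioo, ← theta_image,
    integral_image_eq_integral_abs_deriv_smul measurableSet_Ioi
      (f' := fun u => 1/(1+u)^2) ?_ theta_inj]
  · apply setIntegral_congr_fun measurableSet_Ioi
    intro u hu
    simp only [mem_Ioi] at hu
    have h1 : (0:ℝ) < 1 + u := by linarith
    have hθ0 : (0:ℝ) < u/(1+u) := by positivity
    have hθ1 : u/(1+u) < 1 := by rw [div_lt_one h1]; linarith
    have hone : (1:ℝ) - u/(1+u) = (1+u)⁻¹ := by field_simp; ring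
    have hc1 : ((u/(1+u) : ℝ) : ℂ) ^ (s-1) = Complex.exp (((Real.log u : ℂ) - (Real.log (1+u) : ℂ)) * (s-1)) := by
      rw [Complex.cpow_def_of_ne_zero (by exact_mod_cast hθ0.ne'), ← Complex.ofReal_log hθ0.le,
        Real.log_div hu.ne' h1.ne']
      push_cast
      ring_nf
    have hc2 : ((((1:ℝ)+u)⁻¹ : ℝ) : ℂ) ^ (1-s-1) = Complex.exp ((-(Real.log (1+u) : ℂ)) * (1-s-1)) := by
      rw [Complex.cpow_def_of_ne_zero (by exact_mod_cast (inv_pos.mpr h1).ne'),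
        ← Complex.ofReal_log (inv_pos.mpr h1).le, Real.log_inv]
      push_cast
      ring_nf
    have hexp1u : ((1+u : ℝ) : ℂ) = Complex.exp ((Real.log (1+u) : ℝ) : ℂ) := by
      rw [← Complex.ofReal_exp, Real.exp_log h1]
    have honeC : (1 : ℂ) - ((u/(1+u) : ℝ) : ℂ) = ((((1:ℝ)+u)⁻¹ : ℝ) : ℂ) := by
      have hne : (1+(u:ℂ)) ≠ 0 := by
        intro h
        have := congrArg Complex.re h
        simp at this
        linarith
      push_cast
      field_simp
      ring
    show |1/(1+u)^2| • (((u/(1+u):ℝ):ℂ) ^ (s-1) * ((1:ℂ) - ((u/(1+u):ℝ):ℂ)) ^ (1-s-1)) = g1 s u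
    rw [honeC, hc1, hc2, real_smul, g1]
    have hne : (1+(u:ℂ)) ≠ 0 := by
      intro h
      have := congrArg Complex.re h
      simp at this
      linarith
    have key : Complex.exp (((Real.log u : ℂ) - (Real.log (1+u) : ℂ)) * (s-1)) *
        Complex.exp ((-(Real.log (1+u) : ℂ)) * (1-s-1)) =
        Complex.exp ((s-1) * (Real.log u : ℂ)) * (1+(u:ℂ)) := by
      have h1u : (1:ℂ)+(u:ℂ) = Complex.exp ((Real.log (1+u) : ℝ) : ℂ) := by
        rw [← Complex.ofReal_exp, Real.exp_log h1]
        push_cast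
        ring
      rw [h1u, ← Complex.exp_add, ← Complex.exp_add]
      congr 1
      ring
    rw [key]
    have habs : |1/(1+u)^2| = 1/(1+u)^2 := abs_of_pos (by positivity)
    rw [habs]
    push_cast
    field_simp
  · intro u hu
    simp only [mem_Ioi] at hu
    have h1 : (1:ℝ) + u ≠ 0 := by positivity
    have : HasDerivAt (fun u : ℝ => u/(1+u)) ((1*(1+u) - u*(0+1))/(1+u)^2) u :=
      (hasDerivAt_id u).div ((hasDerivAt_const u 1).add (hasDerivAt_id u)) h1
    have h2 : (1*(1+u) - u*(0+1))/(1+u)^2 = 1/(1+u)^2 := by ring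
    rw [h2] at this
    exact this.hasDerivWithinAt

noncomputable def g2 (s : ℂ) (u : ℝ) : ℂ := Complex.exp ((-s) * Real.log u) / (1+u)

lemma inv_image : (fun t : ℝ => t⁻¹) '' Ioi 1 = Ioo 0 1 := by
  ext x
  constructor
  · rintro ⟨t, ht, rfl⟩
    simp only [mem_Ioi] at ht
    have : (0:ℝ) < t := by linarith
    exact ⟨by positivity, by rw [inv_lt_one_iff₀]; right; exact ht⟩
  · rintro ⟨hx0, hx1⟩
    exact ⟨x⁻¹, by simp only [mem_Ioi]; nlinarith [mul_inv_cancel₀ hx0.ne', inv_pos.mpr hx0], by simp⟩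

lemma B3 (s : ℂ) : ∫ u in Ioo (0:ℝ) 1, g2 s u = ∫ t in Ioi (1:ℝ), g1 s t := by
  rw [← inv_image, integral_image_eq_integral_abs_deriv_smul measurableSet_Ioi
      (f' := fun t => -(t^2)⁻¹) ?_ ?_]
  · apply setIntegral_congr_fun measurableSet_Ioi
    intro t ht
    simp only [mem_Ioi] at ht
    have ht0 : (0:ℝ) < t := by linarith
    have htne : (t:ℂ) ≠ 0 := by exact_mod_cast ht0.ne'
    show |(-(t^2)⁻¹)| • g2 s t⁻¹ = g1 s t
    have habs : |(-(t^2)⁻¹)| = (t^2)⁻¹ := by rw [abs_neg, abs_of_pos (by positivity)]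
    have key : Complex.exp (-s * -(Real.log t : ℂ)) =
        Complex.exp ((s-1) * (Real.log t : ℂ)) * t := by
      have h : (t:ℂ) = Complex.exp ((Real.log t : ℝ) : ℂ) := by
        rw [← Complex.ofReal_exp, Real.exp_log ht0]
      rw [h, ← Complex.exp_add]
      congr 1
      ring
    have hne1 : (1:ℂ) + (t:ℂ) ≠ 0 := by
      have : ((1 + t : ℝ) : ℂ) ≠ 0 := by
        exact_mod_cast (by linarith : (0:ℝ) < 1 + t).ne'
      push_cast at this
      exact this
    have hne2 : (1:ℂ) + ((t:ℂ))⁻¹ ≠ 0 := by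
      have : ((1 + t⁻¹ : ℝ) : ℂ) ≠ 0 := by
        exact_mod_cast (by positivity : (0:ℝ) < 1 + t⁻¹).ne'
      push_cast at this
      exact this
    have hne3 : (t:ℂ)^2 + (t:ℂ)^3 ≠ 0 := by
      have : ((t^2 + t^3 : ℝ) : ℂ) ≠ 0 := by
        exact_mod_cast (by positivity : (0:ℝ) < t^2+t^3).ne'
      push_cast at this
      exact this
    rw [g2, g1, Real.log_inv, real_smul, habs]
    push_cast
    rw [key]
    field_simp
    rw [div_eq_one_iff_eq (by rwa [add_comm] at hne1)]
    ring
  · intro t ht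
    simp only [mem_Ioi] at ht
    have : t ≠ 0 := by intro h; rw [h] at ht; linarith
    exact (hasDerivAt_inv this).hasDerivWithinAt
  · intro a ha b hb h
    simp only [mem_Ioi] at ha hb
    have ha0 : a ≠ 0 := by intro h; rw [h] at ha; linarith
    have hb0 : b ≠ 0 := by intro h; rw [h] at hb; linarith
    simpa [inv_inj] using h

lemma B6 (c : ℝ) : Complex.betaIntegral (1/2 + Complex.I*c) (1 - (1/2 + Complex.I*c)) =
    (Real.pi : ℂ) / (Real.cosh (Real.pi * c) : ℂ) := by
  set s : ℂ := 1/2 + Complex.I*c with hs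
  have hres : s.re = 1/2 := by simp [hs]
  have h1 : 0 < s.re := by rw [hres]; norm_num
  have h2 : 0 < (1-s).re := by simp [Complex.sub_re, hres]; norm_num
  have h := Complex.Gamma_mul_Gamma_eq_betaIntegral h1 h2
  rw [show s + (1-s) = 1 by ring, Complex.Gamma_one, one_mul] at h
  rw [← h, Complex.Gamma_mul_Gamma_one_sub]
  congr 1
  have : (Real.pi : ℂ) * s = Real.pi/2 + (Real.pi * c) * Complex.I := by
    rw [hs]; push_cast; ring
  rw [this, Complex.sin_add, Complex.sin_pi_div_two, Complex.cos_pi_div_two,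
    Complex.cos_mul_I, one_mul, zero_mul, add_zero]
  push_cast [Complex.ofReal_cosh]
  norm_num

lemma norm_g1 (c : ℝ) (u : ℝ) (hu : 0 < u) :
    ‖g1 (1/2 + Complex.I*c) u‖ = u ^ (-(1/2) : ℝ) / |1 + u| := by
  rw [g1, norm_div, Complex.norm_exp]
  congr 1
  · rw [Real.rpow_def_of_pos hu]
    congr 1
    simp [Complex.mul_re, Complex.sub_re, Complex.add_re]
    ring
  · rw [← Complex.ofReal_one, ← Complex.ofReal_add, Complex.norm_real, Real.norm_eq_abs]

lemma norm_g2 (c : ℝ) (u : ℝ) (hu : 0 < u) :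
    ‖g2 (1/2 + Complex.I*c) u‖ = u ^ (-(1/2) : ℝ) / |1 + u| := by
  rw [g2, norm_div, Complex.norm_exp]
  congr 1
  · rw [Real.rpow_def_of_pos hu]
    congr 1
    simp [Complex.mul_re, Complex.neg_re, Complex.add_re]
    ring
  · rw [← Complex.ofReal_one, ← Complex.ofReal_add, Complex.norm_real, Real.norm_eq_abs]

lemma contOn_g1 (s : ℂ) : ContinuousOn (g1 s) (Ioi (0:ℝ)) := by
  apply ContinuousOn.div
  · exact Complex.continuous_exp.comp_continuousOn
      (ContinuousOn.mul continuousOn_const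
        (Complex.continuous_ofReal.comp_continuousOn
          (Real.continuousOn_log.mono (fun x hx => by
            simp only [mem_compl_iff, mem_singleton_iff]
            exact ne_of_gt hx))))
  · fun_prop
  · intro x hx
    simp only [mem_Ioi] at hx
    have : ((1 + x : ℝ) : ℂ) ≠ 0 := by
      exact_mod_cast (by linarith : (0:ℝ) < 1 + x).ne'
    push_cast at this
    simpa [add_comm] using this

lemma contOn_g2 (s : ℂ) : ContinuousOn (g2 s) (Ioi (0:ℝ)) := by
  apply ContinuousOn.div
  · exact Complex.continuous_exp.comp_continuousOn
      (ContinuousOn.mul continuousOn_const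
        (Complex.continuous_ofReal.comp_continuousOn
          (Real.continuousOn_log.mono (fun x hx => by
            simp only [mem_compl_iff, mem_singleton_iff]
            exact ne_of_gt hx))))
  · fun_prop
  · intro x hx
    simp only [mem_Ioi] at hx
    have : ((1 + x : ℝ) : ℂ) ≠ 0 := by
      exact_mod_cast (by linarith : (0:ℝ) < 1 + x).ne'
    push_cast at this
    simpa [add_comm] using this

lemma base_rpow_Ioo : IntegrableOn (fun u : ℝ => u ^ (-(1/2):ℝ)) (Ioo (0:ℝ) 1) := by
  have h := intervalIntegral.intervalIntegrable_rpow' (r := -(1/2)) (by norm_num) (a := (0:ℝ)) (b := 1)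
  rw [intervalIntegrable_iff_integrableOn_Ioc_of_le zero_le_one] at h
  exact h.mono_set Ioo_subset_Ioc_self

lemma int_g1_Ioo (c : ℝ) : IntegrableOn (g1 (1/2 + Complex.I*c)) (Ioo (0:ℝ) 1) := by
  apply Integrable.mono' base_rpow_Ioo
    (((contOn_g1 _).mono (fun x hx => hx.1)).aestronglyMeasurable measurableSet_Ioo)
  filter_upwards [ae_restrict_mem measurableSet_Ioo] with u hu
  rw [norm_g1 c u hu.1]
  have h1 : (1:ℝ) ≤ |1 + u| := by
    rw [abs_of_pos (by linarith [hu.1] : (0:ℝ) < 1 + u)]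
    linarith [hu.1]
  calc u ^ (-(1/2):ℝ) / |1 + u| ≤ u ^ (-(1/2):ℝ) / 1 := by
        apply div_le_div_of_nonneg_left (Real.rpow_nonneg hu.1.le _) (by norm_num) h1
    _ = u ^ (-(1/2):ℝ) := by rw [div_one]

lemma int_g2_Ioo (c : ℝ) : IntegrableOn (g2 (1/2 + Complex.I*c)) (Ioo (0:ℝ) 1) := by
  apply Integrable.mono' base_rpow_Ioo
    (((contOn_g2 _).mono (fun x hx => hx.1)).aestronglyMeasurable measurableSet_Ioo)
  filter_upwards [ae_restrict_mem measurableSet_Ioo] with u hu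
  rw [norm_g2 c u hu.1]
  have h1 : (1:ℝ) ≤ |1 + u| := by
    rw [abs_of_pos (by linarith [hu.1] : (0:ℝ) < 1 + u)]
    linarith [hu.1]
  calc u ^ (-(1/2):ℝ) / |1 + u| ≤ u ^ (-(1/2):ℝ) / 1 := by
        apply div_le_div_of_nonneg_left (Real.rpow_nonneg hu.1.le _) (by norm_num) h1
    _ = u ^ (-(1/2):ℝ) := by rw [div_one]

lemma int_g1_Ioi (c : ℝ) : IntegrableOn (g1 (1/2 + Complex.I*c)) (Ioi (1:ℝ)) := by
  apply Integrable.mono' (integrableOn_Ioi_rpow_of_lt (by norm_num : (-(3/2):ℝ) < -1) zero_lt_one)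
  · exact ((contOn_g1 _).mono (fun x hx => by
      simp only [mem_Ioi] at hx ⊢; linarith)).aestronglyMeasurable measurableSet_Ioi
  · filter_upwards [ae_restrict_mem measurableSet_Ioi] with u hu
    simp only [mem_Ioi] at hu
    have hu0 : (0:ℝ) < u := by linarith
    rw [norm_g1 c u hu0]
    have h1 : u ≤ |1 + u| := by
      rw [abs_of_pos (by linarith : (0:ℝ) < 1 + u)]
      linarith
    have key : u ^ (-(3/2):ℝ) = u ^ (-(1/2):ℝ) / u := by
      rw [show (-(3/2):ℝ) = -(1/2) - 1 by norm_num, Real.rpow_sub hu0, Real.rpow_one]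
    rw [key]
    exact div_le_div_of_nonneg_left (Real.rpow_nonneg hu0.le _) hu0 h1

lemma B4 (c : ℝ) : (∫ u in Ioo (0:ℝ) 1, g1 (1/2 + Complex.I*c) u)
      + ∫ u in Ioi (1:ℝ), g1 (1/2 + Complex.I*c) u
    = ∫ u in Ioi (0:ℝ), g1 (1/2 + Complex.I*c) u := by
  have hun : Ioo (0:ℝ) 1 ∪ Ici 1 = Ioi 0 := Ioo_union_Ici_eq_Ioi zero_lt_one
  rw [← hun, setIntegral_union _ measurableSet_Ici (int_g1_Ioo c)
    (Iff.mpr integrableOn_Ici_iff_integrableOn_Ioi (int_g1_Ioi c)), integral_Ici_eq_integral_Ioi]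
  exact (Set.Iio_disjoint_Ici le_rfl).mono_left Ioo_subset_Iio_self

noncomputable def fC (α : ℝ) (x : ℝ) : ℂ :=
  Complex.exp (Complex.I*α*x) / (7*(Real.cosh (Real.pi*x/7) : ℂ))

lemma psi_image : (fun x : ℝ => Real.exp (-(2*Real.pi/7)*x)) '' Ioi 0 = Ioo 0 1 := by
  have hπ := Real.pi_pos
  ext u
  constructor
  · rintro ⟨x, hx, rfl⟩
    simp only [mem_Ioi] at hx
    refine ⟨Real.exp_pos _, ?_⟩
    rw [Real.exp_lt_one_iff]
    nlinarith
  · rintro ⟨h0, h1⟩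
    refine ⟨-(7/(2*Real.pi)) * Real.log u, ?_, ?_⟩
    · simp only [mem_Ioi]
      have hl := Real.log_neg h0 h1
      have h2 : (0:ℝ) < 7/(2*Real.pi) := by positivity
      nlinarith
    · show Real.exp (-(2*Real.pi/7) * (-(7/(2*Real.pi)) * Real.log u)) = u
      rw [show -(2*Real.pi/7) * (-(7/(2*Real.pi)) * Real.log u) = Real.log u by
        field_simp]
      exact Real.exp_log h0

lemma psi_inj : InjOn (fun x : ℝ => Real.exp (-(2*Real.pi/7)*x)) (Ioi 0) := by
  intro a _ b _ h
  have hπ := Real.pi_pos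
  have h2 : -(2*Real.pi/7)*a = -(2*Real.pi/7)*b := Real.exp_injective h
  have h3 : -(2*Real.pi/7) ≠ 0 := by
    intro hc
    nlinarith
  exact mul_left_cancel₀ h3 h2

lemma B2 (α : ℝ) :
    ∫ u in Ioo (0:ℝ) 1, (g1 (1/2 + Complex.I*(7*α/(2*Real.pi))) u
      + g2 (1/2 + Complex.I*(7*α/(2*Real.pi))) u)/(Real.pi:ℂ)
    = ∫ x in Ioi (0:ℝ), (fC α x + fC α (-x)) := by
  have hπ := Real.pi_pos
  have hπC : (Real.pi : ℂ) ≠ 0 := Complex.ofReal_ne_zero.mpr hπ.ne'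
  rw [← psi_image, integral_image_eq_integral_abs_deriv_smul measurableSet_Ioi
      (f' := fun x => -(2*Real.pi/7) * Real.exp (-(2*Real.pi/7)*x)) ?_ psi_inj]
  · apply setIntegral_congr_fun measurableSet_Ioi
    intro x hx
    simp only [mem_Ioi] at hx
    set E := Real.exp (Real.pi*x/7) with hEdef
    have hE : 0 < E := Real.exp_pos _
    have hψ : Real.exp (-(2*Real.pi/7)*x) = (E*E)⁻¹ := by
      rw [hEdef, show -(2*Real.pi/7)*x = -(Real.pi*x/7 + Real.pi*x/7) by ring,
        Real.exp_neg, Real.exp_add]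
    have hlog : Real.log (Real.exp (-(2*Real.pi/7)*x)) = -(2*Real.pi/7)*x := Real.log_exp _
    have eA : Complex.exp ((1/2 + Complex.I*(7*α/(2*Real.pi)) - 1) * ((-(2*Real.pi/7)*x : ℝ) : ℂ))
        = (E:ℂ) * Complex.exp (-(Complex.I*α*x)) := by
      rw [show ((1/2 + Complex.I*(7*α/(2*Real.pi)) - 1) * ((-(2*Real.pi/7)*x : ℝ) : ℂ))
          = ((Real.pi*x/7 : ℝ) : ℂ) + (-(Complex.I*α*x)) by push_cast; field_simp; ring,
        Complex.exp_add, hEdef, Complex.ofReal_exp]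
    have eB : Complex.exp ((-(1/2 + Complex.I*(7*α/(2*Real.pi)))) * ((-(2*Real.pi/7)*x : ℝ) : ℂ))
        = (E:ℂ) * Complex.exp (Complex.I*α*x) := by
      rw [show ((-(1/2 + Complex.I*(7*α/(2*Real.pi)))) * ((-(2*Real.pi/7)*x : ℝ) : ℂ))
          = ((Real.pi*x/7 : ℝ) : ℂ) + (Complex.I*α*x) by push_cast; field_simp,
        Complex.exp_add, hEdef, Complex.ofReal_exp]
    have hcosh : Real.cosh (Real.pi*x/7) = (E + E⁻¹)/2 := by
      rw [Real.cosh_eq, hEdef, Real.exp_neg]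
    have hcoshneg : Real.cosh (Real.pi*(-x)/7) = (E + E⁻¹)/2 := by
      rw [show Real.pi*(-x)/7 = -(Real.pi*x/7) by ring, Real.cosh_neg]
      exact hcosh
    show |(-(2*Real.pi/7)) * Real.exp (-(2*Real.pi/7)*x)| •
      ((g1 _ (Real.exp (-(2*Real.pi/7)*x)) + g2 _ (Real.exp (-(2*Real.pi/7)*x)))/(Real.pi:ℂ))
      = fC α x + fC α (-x)
    rw [g1, g2, hlog, eA, eB, fC, fC, hcosh, hcoshneg]
    have habs : |(-(2*Real.pi/7)) * Real.exp (-(2*Real.pi/7)*x)|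
        = (2*Real.pi/7) * (E*E)⁻¹ := by
      rw [abs_mul, abs_neg, abs_of_pos (by positivity), abs_of_pos (Real.exp_pos _), hψ]
    rw [habs, hψ, real_smul]
    have hEC : (E:ℂ) ≠ 0 := Complex.ofReal_ne_zero.mpr hE.ne'
    have hden : (1:ℂ) + ((E:ℂ)*(E:ℂ))⁻¹ ≠ 0 := by
      have : ((1 + (E*E)⁻¹ : ℝ) : ℂ) ≠ 0 := by
        exact_mod_cast (by positivity : (0:ℝ) < 1 + (E*E)⁻¹).ne'
      push_cast at this
      exact this
    have hsum : (E:ℂ) + (E:ℂ)⁻¹ ≠ 0 := by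
      have : ((E + E⁻¹ : ℝ) : ℂ) ≠ 0 := by
        exact_mod_cast (by positivity : (0:ℝ) < E + E⁻¹).ne'
      push_cast at this
      exact this
    have hIA : Complex.exp (Complex.I*α*(-x:ℝ)) = Complex.exp (-(Complex.I*α*x)) := by
      push_cast
      ring_nf
    rw [hIA]
    have hbig : (Real.pi:ℂ)*(E:ℂ)^2*7 + (Real.pi:ℂ)*(E:ℂ)^4*7 ≠ 0 := by
      have : ((Real.pi*E^2*7 + Real.pi*E^4*7 : ℝ) : ℂ) ≠ 0 := by
        exact_mod_cast (by positivity : (0:ℝ) < Real.pi*E^2*7 + Real.pi*E^4*7).ne'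
      push_cast at this
      exact this
    have hsm : (7:ℂ) + (E:ℂ)^2*7 ≠ 0 := by
      have : ((7 + E^2*7 : ℝ) : ℂ) ≠ 0 := by
        exact_mod_cast (by positivity : (0:ℝ) < 7 + E^2*7).ne'
      push_cast at this
      exact this
    push_cast
    field_simp
    have hEE1 : ((E:ℂ)*(E:ℂ)+1) ≠ 0 := by
      have : ((E*E+1 : ℝ):ℂ) ≠ 0 := by
        exact_mod_cast (by positivity : (0:ℝ) < E*E+1).ne'
      push_cast at this
      exact this
    ring
  · intro x _
    have h : HasDerivAt (fun x : ℝ => Real.exp (-(2*Real.pi/7)*x))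
        (-(2*Real.pi/7) * Real.exp (-(2*Real.pi/7)*x)) x := by
      have h1 : HasDerivAt (fun x : ℝ => -(2*Real.pi/7)*x) (-(2*Real.pi/7)) x := by
        simpa using (hasDerivAt_id x).const_mul (-(2*Real.pi/7))
      simpa [mul_comm] using h1.exp
    exact h.hasDerivWithinAt

lemma B1 (α : ℝ) (hint : Integrable (fC α)) :
    ∫ x, fC α x = ∫ x in Ioi (0:ℝ), (fC α x + fC α (-x)) := by
  have h1 : ∫ x, fC α x = (∫ x in Iic (0:ℝ), fC α x) + ∫ x in Ioi (0:ℝ), fC α x := by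
    rw [← setIntegral_univ, ← Iic_union_Ioi (a := (0:ℝ)),
      setIntegral_union (Iic_disjoint_Ioi le_rfl) measurableSet_Ioi
        hint.integrableOn hint.integrableOn]
  rw [h1, show Iic (0:ℝ) = Iic (-0) by norm_num, ← integral_comp_neg_Ioi]
  rw [← integral_add hint.comp_neg.integrableOn hint.integrableOn]
  congr 1
  ext x
  ring

lemma key0 (α : ℝ) (hint : Integrable (fC α)) :
    ∫ x, fC α x = ((Real.cosh (7*α/2) : ℝ) : ℂ)⁻¹ := by
  have hπ := Real.pi_pos
  have hπC : (Real.pi:ℂ) ≠ 0 := Complex.ofReal_ne_zero.mpr hπ.ne'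
  have hπc : Real.pi * (7*α/(2*Real.pi)) = 7*α/2 := by field_simp
  rw [B1 α hint, ← B2 α]
  rw [show (7*(α:ℂ)/(2*(Real.pi:ℂ))) = ((7*α/(2*Real.pi) : ℝ) : ℂ) by push_cast; ring]
  rw [integral_div, integral_add (int_g1_Ioo (7*α/(2*Real.pi))) (int_g2_Ioo (7*α/(2*Real.pi))),
    B3, B4, ← B5, B6, hπc]
  have hcne : ((Real.cosh (7*α/2) : ℝ) : ℂ) ≠ 0 :=
    Complex.ofReal_ne_zero.mpr (Real.cosh_pos _).ne'
  field_simp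




lemma integrable_fI (n : ℕ) (α : ℝ) : Integrable (fI n α) := integrable_main n α

lemma norm_fI (n : ℕ) (α : ℝ) (x : ℝ) :
    ‖fI n α x‖ = |x| ^ n / (7 * Real.cosh (Real.pi * x / 7)) := norm_integrand n α x

lemma step (n : ℕ)
    (hn : ∀ β : ℝ, (∫ x : ℝ, fI n β x) = (7*Complex.I/2)^n * ((gB n (7*β/2) : ℝ) : ℂ))
    (α : ℝ) :
    (∫ x : ℝ, fI (n+1) α x) = (7*Complex.I/2)^(n+1) * ((gB (n+1) (7*α/2) : ℝ) : ℂ) := by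
  have hder : ∀ (β : ℝ) (x : ℝ),
      HasDerivAt (fun β : ℝ => fI n β x) (Complex.I * fI (n+1) β x) β := by
    intro β x
    have h0 : HasDerivAt (fun β : ℝ => ((β : ℝ) : ℂ)) 1 β := Complex.ofRealCLM.hasDerivAt
    have h1 : HasDerivAt (fun β : ℝ => Complex.I*(β:ℂ)*(x:ℂ)) (Complex.I*(x:ℂ)) β := by
      simpa [mul_assoc] using ((h0.const_mul Complex.I).mul_const (x:ℂ))
    have h3 := (h1.cexp.mul_const ((x:ℂ)^n)).div_const (7*(Real.cosh (Real.pi*x/7):ℂ))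
    refine h3.congr_deriv (Eq.symm ?_)
    rw [fI]
    ring
  have hbound_int : Integrable (fun x : ℝ => |x|^(n+1) / (7*Real.cosh (Real.pi*x/7))) :=
    (integrable_fI (n+1) α).norm.congr (ae_of_all _ fun x => norm_fI (n+1) α x)
  have key := hasDerivAt_integral_of_dominated_loc_of_deriv_le (μ := volume)
    (F := fun β (x : ℝ) => fI n β x) (F' := fun β (x : ℝ) => Complex.I * fI (n+1) β x)
    (x₀ := α) (bound := fun x : ℝ => |x|^(n+1) / (7*Real.cosh (Real.pi*x/7)))
    (s := Metric.ball α 1) (Metric.ball_mem_nhds α one_pos)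
    (Filter.Eventually.of_forall (fun β => (integrable_fI n β).aestronglyMeasurable))
    (integrable_fI n α)
    (((integrable_fI (n+1) α).const_mul Complex.I).aestronglyMeasurable)
    (ae_of_all _ fun x β _ => le_of_eq
      (by rw [norm_mul, Complex.norm_I, one_mul, norm_fI]))
    hbound_int
    (ae_of_all _ fun x β _ => hder β x)
  have hRW : (fun β : ℝ => ∫ x : ℝ, fI n β x)
      = fun β => (7*Complex.I/2)^n * ((gB n (7*β/2) : ℝ):ℂ) := funext hn
  have hd2 : HasDerivAt (fun β : ℝ => (7*Complex.I/2)^n * ((gB n (7*β/2) : ℝ):ℂ))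
      ((7*Complex.I/2)^n * ((-(gB (n+1) (7*α/2)) * (7/2) : ℝ) : ℂ)) α := by
    have hlin : HasDerivAt (fun β : ℝ => 7*β/2) (7/2) α := by
      simpa using ((hasDerivAt_id α).const_mul (7:ℝ)).div_const 2
    have ha : HasDerivAt (fun β : ℝ => gB n (7*β/2)) (-(gB (n+1) (7*α/2)) * (7/2)) α :=
      by have := (hasDerivAt_gB n (7*α/2)).comp α hlin; exact this
    exact (ha.ofReal_comp).const_mul _
  rw [hRW] at key
  have hEq := key.2.unique hd2
  rw [MeasureTheory.integral_const_mul] at hEq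
  have hfin : (∫ x : ℝ, fI (n+1) α x)
      = -Complex.I * ((7*Complex.I/2)^n * ((-(gB (n+1) (7*α/2)) * (7/2) : ℝ):ℂ)) := by
    rw [← hEq, ← mul_assoc, neg_mul, Complex.I_mul_I, neg_neg, one_mul]
  rw [hfin, pow_succ]
  push_cast
  ring

lemma gB0 (y : ℝ) : (Real.cosh y)⁻¹ = gB 0 y := by
  have hE : (0:ℝ) < Real.exp (-y) := Real.exp_pos _
  have h2 : Real.exp (-(2*y)) = (Real.exp (-y))^2 := by
    rw [sq, ← Real.exp_add]; congr 1; ring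
  have h3 : Real.exp y = (Real.exp (-y))⁻¹ := by
    rw [← Real.exp_neg, neg_neg]
  rw [gB, Real.cosh_eq, pow_one, h2, h3]
  have h4 : Polynomial.eval (-Real.exp (-y) ^ 2) (eulerB 0) = 1 := by
    simp [eulerB]
  rw [h4, mul_one]
  have h5 : (0:ℝ) < 1 + Real.exp (-y)^2 := by positivity
  field_simp

lemma base (α : ℝ) : (∫ x : ℝ, fI 0 α x) = (7*Complex.I/2)^0 * ((gB 0 (7*α/2) : ℝ) : ℂ) := by
  have heq : ∀ x : ℝ, fI 0 α x = fC α x := fun x => by rw [fI, fC, pow_zero, mul_one]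
  have h1 : (∫ x : ℝ, fI 0 α x) = ∫ x, fC α x := by
    congr 1
    funext x
    exact heq x
  have hint : Integrable (fC α) :=
    (integrable_fI 0 α).congr (ae_of_all _ heq)
  rw [h1, key0 α hint, pow_zero, one_mul, ← Complex.ofReal_inv, gB0]

theorem integral_exp_pow_div_cosh (n : ℕ) (α : ℝ) :
    Integrable (fun x : ℝ =>
      Complex.exp (Complex.I * α * x) * (x : ℂ) ^ n /
        (7 * (Real.cosh (Real.pi * x / 7) : ℂ))) ∧
    (∫ x : ℝ, Complex.exp (Complex.I * α * x) * (x : ℂ) ^ n /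
        (7 * (Real.cosh (Real.pi * x / 7) : ℂ))) =
      (7 * Complex.I / 2) ^ n *
        ((2 * Real.exp (-(7 * α / 2)) * (eulerB n).eval (-Real.exp (-2 * (7 * α / 2))) /
          (1 + Real.exp (-2 * (7 * α / 2))) ^ (n + 1) : ℝ) : ℂ) := by
  constructor
  · exact integrable_main n α
  · have hform : ∀ m : ℕ, ∀ β : ℝ, (∫ x : ℝ, fI m β x)
        = (7*Complex.I/2)^m * ((gB m (7*β/2) : ℝ) : ℂ) := by
      intro m
      induction m with
      | zero => exact base
      | succ k ih => exact step k ih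
    have h := hform n α
    have hid : (∫ x : ℝ, Complex.exp (Complex.I * α * x) * (x : ℂ) ^ n /
        (7 * (Real.cosh (Real.pi * x / 7) : ℂ))) = ∫ x : ℝ, fI n α x := rfl
    rw [hid, h, gB]
    rw [show (-(2*(7*α/2)) : ℝ) = -2*(7*α/2) by ring]
end

section
/- Let a < b be real numbers and let f : [a,b] → ℂ be real analytic (i.e. f extends to an analytic function on an open neighborhood of [a,b] in ℂ) and not identically zero on [a,b]. Then there exist real analytic functions U : [a,b] → ℝ and φ : [a,b] → ℝ such that f(t) = U(t)·e^{iφ(t)} for all t ∈ [a,b]. Moreover, if f = U₁·e^{iφ₁} = U₂·e^{iφ₂} are two such representations, then either U₁ = U₂ on [a,b] and φ₁ − φ₂ is a constant of the form 2kπ, or U₁ = −U₂ on [a,b] and φ₁ − φ₂ is a constant of the form (2k+1)π, for some integer k. -/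
open Complex Set

/-- A function `f : ℝ → ℂ` is real analytic on `[a,b]` if it extends to an analytic
function on an open neighborhood of `[a,b]` in `ℂ`. -/
def RealAnalyticOnIcc (a b : ℝ) (f : ℝ → ℂ) : Prop :=
  ∃ U : Set ℂ, IsOpen U ∧ (∀ t ∈ Set.Icc a b, (t : ℂ) ∈ U) ∧
    ∃ F : ℂ → ℂ, AnalyticOnNhd ℂ F U ∧ ∀ t ∈ Set.Icc a b, F (t : ℂ) = f t

open Filter Metric


noncomputable section PolarAux

/-- Tube neighborhood of the segment `[a,b]` in `ℂ`. -/
def polarTube (a b ε : ℝ) : Set ℂ := ⋃ t ∈ Set.Icc a b, Metric.ball (t : ℂ) ε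

lemma polarTube_isOpen (a b ε : ℝ) : IsOpen (polarTube a b ε) :=
  isOpen_biUnion fun _ _ => isOpen_ball

lemma mem_polarTube_self {a b : ℝ} (ε : ℝ) (hε : 0 < ε) {t : ℝ} (ht : t ∈ Set.Icc a b) :
    (t : ℂ) ∈ polarTube a b ε :=
  Set.mem_biUnion ht (by simpa using hε)

lemma polarTube_conj {a b ε : ℝ} {z : ℂ} (hz : z ∈ polarTube a b ε) :
    (starRingEnd ℂ) z ∈ polarTube a b ε := by
  rcases Set.mem_iUnion₂.1 hz with ⟨t, ht, hzt⟩
  refine Set.mem_biUnion ht ?_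
  have h1 : dist ((starRingEnd ℂ) z) ((t : ℂ)) = dist z (t : ℂ) := by
    have := Complex.dist_conj_conj z (t : ℂ)
    rwa [Complex.conj_ofReal] at this
  rw [mem_ball, h1]
  exact mem_ball.1 hzt

lemma polarTube_isPreconnected {a b : ℝ} (hab : a ≤ b) {ε : ℝ} (hε : 0 < ε) :
    IsPreconnected (polarTube a b ε) := by
  have h : polarTube a b ε = ⋃ t ∈ Set.Icc a b,
      (((fun s : ℝ => (s : ℂ)) '' Set.Icc a b) ∪ Metric.ball (t : ℂ) ε) := by
    apply Set.Subset.antisymm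
    · intro z hz
      rcases Set.mem_iUnion₂.1 hz with ⟨t, ht, hzt⟩
      exact Set.mem_biUnion ht (Or.inr hzt)
    · intro z hz
      rcases Set.mem_iUnion₂.1 hz with ⟨t, ht, hzt⟩
      rcases hzt with h | h
      · rcases h with ⟨s, hs, rfl⟩
        exact Set.mem_biUnion hs (by simpa using hε)
      · exact Set.mem_biUnion ht h
  rw [h]
  have hseg : IsPreconnected ((fun s : ℝ => (s : ℂ)) '' Set.Icc a b) :=
    (isPreconnected_Icc).image _ Complex.continuous_ofReal.continuousOn
  apply IsPreconnected.biUnion_of_reflTransGen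
  · intro t ht
    apply hseg.union' ?_ (convex_ball _ _).isPreconnected
    refine ⟨(t : ℂ), Set.mem_image_of_mem _ ht, by simpa using hε⟩
  · intro i hi j hj
    exact Relation.ReflTransGen.single ⟨⟨(i : ℂ), Or.inl (Set.mem_image_of_mem _ hi),
      Or.inl (Set.mem_image_of_mem _ hi)⟩, hi⟩

lemma polarTube_subset {a b : ℝ} {V : Set ℂ} (hV : IsOpen V)
    (hsub : ∀ t ∈ Set.Icc a b, (t : ℂ) ∈ V) :
    ∃ ε > 0, polarTube a b ε ⊆ V := by
  have hseg : IsCompact ((fun s : ℝ => (s : ℂ)) '' Set.Icc a b) :=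
    isCompact_Icc.image Complex.continuous_ofReal
  have hsegV : ((fun s : ℝ => (s : ℂ)) '' Set.Icc a b) ⊆ V := by
    rintro z ⟨t, ht, rfl⟩; exact hsub t ht
  obtain ⟨δ, hδ, hth⟩ := hseg.exists_thickening_subset_open hV hsegV
  refine ⟨δ, hδ, ?_⟩
  intro z hz
  rcases Set.mem_iUnion₂.1 hz with ⟨t, ht, hzt⟩
  apply hth
  rw [Metric.mem_thickening_iff]
  exact ⟨(t : ℂ), Set.mem_image_of_mem _ ht, mem_ball.1 hzt⟩

lemma polarTube_mono {a b : ℝ} {ε ε' : ℝ} (h : ε ≤ ε') :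
    polarTube a b ε ⊆ polarTube a b ε' := by
  intro z hz
  rcases Set.mem_iUnion₂.1 hz with ⟨t, ht, hzt⟩
  exact Set.mem_biUnion ht (Metric.ball_subset_ball h hzt)

end PolarAux

/-- If `F` is analytic on a conj-symmetric open set, so is `z ↦ conj (F (conj z))`. -/
lemma analyticOnNhd_conj_conj {V : Set ℂ} (hV : IsOpen V)
    (hsym : ∀ z ∈ V, (starRingEnd ℂ) z ∈ V) {F : ℂ → ℂ} (hF : AnalyticOnNhd ℂ F V) :
    AnalyticOnNhd ℂ (fun z => (starRingEnd ℂ) (F ((starRingEnd ℂ) z))) V := by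
  apply DifferentiableOn.analyticOnNhd ?_ hV
  intro z hz
  have hz' : (starRingEnd ℂ) z ∈ V := hsym z hz
  have hdF : DifferentiableAt ℂ F ((starRingEnd ℂ) z) := (hF _ hz').differentiableAt
  have hD : HasDerivAt F (deriv F ((starRingEnd ℂ) z)) ((starRingEnd ℂ) z) := hdF.hasDerivAt
  set d := deriv F ((starRingEnd ℂ) z)
  have : HasDerivAt (fun w => (starRingEnd ℂ) (F ((starRingEnd ℂ) w))) ((starRingEnd ℂ) d) z := by
    rw [hasDerivAt_iff_isLittleO] at hD ⊢
    have hconj : Filter.Tendsto (starRingEnd ℂ) (nhds z) (nhds ((starRingEnd ℂ) z)) :=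
      (Complex.continuous_conj).continuousAt
    have h2 := hD.comp_tendsto hconj
    rw [Asymptotics.isLittleO_iff] at h2 ⊢
    intro c hc
    filter_upwards [h2 hc] with w hw
    have e1 : (starRingEnd ℂ) (F ((starRingEnd ℂ) w)) - (starRingEnd ℂ) (F ((starRingEnd ℂ) z))
        - (w - z) * (starRingEnd ℂ) d
        = (starRingEnd ℂ) (F ((starRingEnd ℂ) w) - F ((starRingEnd ℂ) z)
            - ((starRingEnd ℂ) w - (starRingEnd ℂ) z) * d) := by
      simp [map_sub, map_mul]
    rw [smul_eq_mul, mul_comm] at *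
    rw [e1]
    have e2 : ‖(starRingEnd ℂ) (F ((starRingEnd ℂ) w) - F ((starRingEnd ℂ) z)
        - ((starRingEnd ℂ) w - (starRingEnd ℂ) z) * d)‖
        = ‖F ((starRingEnd ℂ) w) - F ((starRingEnd ℂ) z)
            - ((starRingEnd ℂ) w - (starRingEnd ℂ) z) * d‖ := by
      exact RCLike.norm_conj _
    rw [e2]
    have e3 : ‖w - z‖ = ‖(starRingEnd ℂ) w - (starRingEnd ℂ) z‖ := by
      rw [← map_sub]; exact (RCLike.norm_conj _).symm
    rw [e3]
    have := hw
    simpa [Function.comp, smul_eq_mul, mul_comm] using this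
  exact this.differentiableAt.differentiableWithinAt

/-- Zeros of a nonzero analytic function in a compact subset are finite. -/
lemma zeros_finite {R : Set ℂ} (hRpre : IsPreconnected R)
    {F : ℂ → ℂ} (hF : AnalyticOnNhd ℂ F R) {z₁ : ℂ} (hz₁ : z₁ ∈ R) (hne : F z₁ ≠ 0)
    {K : Set ℂ} (hK : IsCompact K) (hKR : K ⊆ R) : {z ∈ K | F z = 0}.Finite := by
  by_contra hinf
  rw [← Set.not_infinite, not_not] at hinf
  obtain ⟨x, hxK, hacc⟩ := hinf.exists_accPt_of_subset_isCompact hK (fun z hz => hz.1)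
  have hfreq : ∃ᶠ w in nhdsWithin x {x}ᶜ, F w = 0 := by
    have := accPt_iff_frequently.1 hacc
    rw [frequently_nhdsWithin_iff]
    exact this.mono fun w hw => ⟨hw.2.2, hw.1⟩
  have := hF.eqOn_zero_of_preconnected_of_frequently_eq_zero hRpre (hKR hxK) hfreq
  exact hne (this hz₁)

/-- A continuous function with values in `c ℤ + d` on a preconnected set is constant. -/
lemma int_constant {X : Type*} [TopologicalSpace X] {s : Set X} (hs : IsPreconnected s)
    {g : X → ℝ} (hg : ContinuousOn g s) {c d : ℝ} (hc : 0 < c)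
    (hint : ∀ x ∈ s, ∃ n : ℤ, g x = c * n + d) {x y : X} (hx : x ∈ s) (hy : y ∈ s) :
    g x = g y := by
  have himg : IsPreconnected (g '' s) := hs.image g hg
  have key : ∀ u v : X, u ∈ s → v ∈ s → ¬ g u < g v := by
    intro u v hu hv hlt
    obtain ⟨n, hn⟩ := hint u hu
    obtain ⟨n', hn'⟩ := hint v hv
    have hnn' : (n : ℝ) < n' := by
      by_contra hcon
      push_neg at hcon
      have : g v ≤ g u := by
        rw [hn, hn']
        have := mul_le_mul_of_nonneg_left hcon hc.le
        linarith
      linarith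
    have hmem : c * n + d + c / 2 ∈ g '' s := by
      apply himg.Icc_subset ⟨u, hu, rfl⟩ ⟨v, hv, rfl⟩
      constructor
      · rw [hn]; linarith
      · rw [hn']
        have : (n : ℝ) + 1 ≤ n' := by
          have : n < n' := by exact_mod_cast hnn'
          exact_mod_cast this
        nlinarith
    obtain ⟨w, hw, hww⟩ := hmem
    obtain ⟨k, hk⟩ := hint w hw
    rw [hk] at hww
    have : (k : ℝ) - n = 1 / 2 := by
      field_simp at hww ⊢
      nlinarith
    have h2 : ((2 * (k - n) : ℤ) : ℝ) = 1 := by push_cast; linarith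
    have : (2 * (k - n) : ℤ) = 1 := by exact_mod_cast h2
    omega
  rcases lt_trichotomy (g x) (g y) with h | h | h
  · exact absurd h (key x y hx hy)
  · exact h
  · exact absurd h (key y x hy hx)

/-- Two continuous logarithms of the same function differ by a constant on a preconnected set. -/
lemma const_of_exp_eq {s : Set ℂ} (hs : IsPreconnected s) {f g : ℂ → ℂ}
    (hf : ContinuousOn f s) (hg : ContinuousOn g s)
    (h : ∀ z ∈ s, Complex.exp (f z) = Complex.exp (g z)) {z w : ℂ}
    (hz : z ∈ s) (hw : w ∈ s) : f z - g z = f w - g w := by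
  have hpt : ∀ x ∈ s, ∃ n : ℤ, f x - g x = n * (2 * Real.pi * Complex.I) := by
    intro x hx
    obtain ⟨n, hn⟩ := Complex.exp_eq_exp_iff_exists_int.1 (h x hx)
    exact ⟨n, by rw [hn]; ring⟩
  have hre : ∀ x ∈ s, (f x - g x).re = 0 := by
    intro x hx
    obtain ⟨n, hn⟩ := hpt x hx
    rw [hn]
    simp
  have him : ∀ x ∈ s, ∃ n : ℤ, (f x - g x).im = (2 * Real.pi) * n + 0 := by
    intro x hx
    obtain ⟨n, hn⟩ := hpt x hx
    refine ⟨n, ?_⟩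
    rw [hn]
    simp
    ring
  have hcont : ContinuousOn (fun x => (f x - g x).im) s :=
    (Complex.continuous_im.comp_continuousOn (hf.sub hg))
  have := int_constant hs hcont (by positivity) him hz hw
  apply Complex.ext
  · rw [hre z hz, hre w hw]
  · simpa using this

open Filter in
/-- Existence of an analytic logarithm of a nonvanishing analytic function on a
conj-symmetric open neighborhood of the segment `[a,b]`. -/
lemma exists_log (a b : ℝ) (hab : a < b) {V : Set ℂ} (hV : IsOpen V)
    (hsub : ∀ t ∈ Set.Icc a b, (t : ℂ) ∈ V) {W : ℂ → ℂ} (hW : AnalyticOnNhd ℂ W V)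
    (hWne : ∀ z ∈ V, W z ≠ 0) :
    ∃ (Ω : Set ℂ) (Φ : ℂ → ℂ), IsOpen Ω ∧ (∀ t ∈ Set.Icc a b, (t : ℂ) ∈ Ω) ∧ Ω ⊆ V ∧
      (∀ z ∈ Ω, (starRingEnd ℂ) z ∈ Ω) ∧ AnalyticOnNhd ℂ Φ Ω ∧
      ∀ z ∈ Ω, Complex.exp (Φ z) = W z := by
  classical
  -- the segment and a compact neighborhood
  set seg : Set ℂ := (fun s : ℝ => (s : ℂ)) '' Set.Icc a b with hseg_def
  have hsegc : IsCompact seg := isCompact_Icc.image Complex.continuous_ofReal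
  have hsegV : seg ⊆ V := by rintro z ⟨t, ht, rfl⟩; exact hsub t ht
  obtain ⟨δ, hδ, hth⟩ := hsegc.exists_thickening_subset_open hV hsegV
  set K : Set ℂ := Metric.cthickening (δ/2) seg with hK_def
  have hKc : IsCompact K := hsegc.cthickening
  have hKV : K ⊆ V :=
    (Metric.cthickening_subset_thickening' hδ (half_lt_self hδ) seg).trans hth
  have hsegK : seg ⊆ K := Metric.self_subset_cthickening seg
  have hWzK : ∀ z ∈ K, W z ≠ 0 := fun z hz => hWne z (hKV hz)
  -- minimum of ‖W‖ on K
  have hKne : K.Nonempty := ⟨(a : ℂ), hsegK ⟨a, Set.left_mem_Icc.2 hab.le, rfl⟩⟩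
  obtain ⟨z₀, hz₀K, hz₀min⟩ := hKc.exists_isMinOn hKne
    ((hW.continuousOn.mono hKV).norm)
  set m : ℝ := ‖W z₀‖ with hm_def
  have hm : 0 < m := norm_pos_iff.2 (hWzK z₀ hz₀K)
  have hmin : ∀ z ∈ K, m ≤ ‖W z‖ := fun z hz => hz₀min hz
  -- uniform continuity
  have hUC : UniformContinuousOn W K :=
    hKc.uniformContinuousOn_of_continuous (hW.continuousOn.mono hKV)
  rw [Metric.uniformContinuousOn_iff] at hUC
  obtain ⟨ρ₀, hρ₀, hUC⟩ := hUC m hm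
  set ρ : ℝ := min ρ₀ (δ/2) with hρ_def
  have hρ : 0 < ρ := lt_min hρ₀ (half_pos hδ)
  -- choose the subdivision
  obtain ⟨N, hN⟩ := exists_nat_gt ((b - a)/ρ)
  have hbapos : 0 < b - a := sub_pos.2 hab
  have hNpos : 0 < (N : ℝ) := lt_trans (div_pos hbapos hρ) hN
  have hN0 : N ≠ 0 := (Nat.cast_pos.mp hNpos).ne'
  set h : ℝ := (b - a)/N with hh_def
  have hhpos : 0 < h := div_pos hbapos hNpos
  have hhρ : h < ρ := by
    rw [hh_def, div_lt_iff₀ hNpos]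
    rw [div_lt_iff₀ hρ] at hN
    nlinarith
  set x : ℕ → ℝ := fun k => a + k * h with hx_def
  have hx0 : x 0 = a := by simp [hx_def]
  have hxN : x N = b := by
    simp only [hx_def, hh_def]
    field_simp
    ring
  have hxmem : ∀ k, k ≤ N → x k ∈ Set.Icc a b := by
    intro k hk
    constructor
    · have : 0 ≤ (k:ℝ) * h := mul_nonneg (Nat.cast_nonneg k) hhpos.le
      simp only [hx_def]; linarith
    · have : (k : ℝ) * h ≤ N * h :=
        mul_le_mul_of_nonneg_right (by exact_mod_cast hk) hhpos.le
      calc x k = a + k * h := rfl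
        _ ≤ a + N * h := by linarith
        _ = b := by rw [← hxN]
  set B : ℕ → Set ℂ := fun k => Metric.ball ((x k : ℝ) : ℂ) h with hB_def
  have hBK : ∀ k, k ≤ N → B k ⊆ K := by
    intro k hk z hz
    rw [hK_def]
    exact Metric.mem_cthickening_of_dist_le z ((x k : ℝ) : ℂ) (δ/2) seg
      ⟨x k, hxmem k hk, rfl⟩
      (le_trans (Metric.mem_ball.1 hz).le (le_trans hhρ.le (min_le_right _ _)))
  have hBV : ∀ k, k ≤ N → B k ⊆ V := fun k hk => (hBK k hk).trans hKV
  -- local ratios are in the slit plane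
  have hxkK : ∀ k, k ≤ N → ((x k : ℝ) : ℂ) ∈ K := fun k hk => hsegK ⟨x k, hxmem k hk, rfl⟩
  have hclose : ∀ k, k ≤ N → ∀ z ∈ B k, ‖W z - W ((x k : ℝ) : ℂ)‖ < m := by
    intro k hk z hz
    have h1 : dist (W z) (W ((x k : ℝ) : ℂ)) < m :=
      hUC z (hBK k hk hz) _ (hxkK k hk) (lt_of_lt_of_le (Metric.mem_ball.1 hz)
        (le_trans hhρ.le (min_le_left _ _)))
    rwa [dist_eq_norm] at h1
  have hratio : ∀ k, k ≤ N → ∀ z ∈ B k, W z / W ((x k : ℝ) : ℂ) ∈ Complex.slitPlane := by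
    intro k hk z hz
    have hvne : W ((x k : ℝ) : ℂ) ≠ 0 := hWzK _ (hxkK k hk)
    have hv : m ≤ ‖W ((x k : ℝ) : ℂ)‖ := hmin _ (hxkK k hk)
    have h1 : ‖W z / W ((x k : ℝ) : ℂ) - 1‖ < 1 := by
      rw [div_sub_one hvne, norm_div]
      rw [div_lt_one (norm_pos_iff.2 hvne)]
      exact lt_of_lt_of_le (hclose k hk z hz) hv
    left
    have h2 : (1 - W z / W ((x k : ℝ) : ℂ)).re ≤ ‖1 - W z / W ((x k : ℝ) : ℂ)‖ :=
      Complex.re_le_norm _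
    rw [norm_sub_rev] at h1
    have h3 : (1 - W z / W ((x k : ℝ) : ℂ)).re = 1 - (W z / W ((x k : ℝ) : ℂ)).re := by
      simp
    linarith
  -- local logarithms
  set Λ : ℕ → ℂ → ℂ := fun k z =>
    Complex.log (W ((x k : ℝ) : ℂ)) + Complex.log (W z / W ((x k : ℝ) : ℂ)) with hΛ_def
  have hΛexp : ∀ k, k ≤ N → ∀ z ∈ B k, Complex.exp (Λ k z) = W z := by
    intro k hk z hz
    have hvne : W ((x k : ℝ) : ℂ) ≠ 0 := hWzK _ (hxkK k hk)
    have hune : W z ≠ 0 := hWzK _ (hBK k hk hz)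
    rw [hΛ_def]
    simp only
    rw [Complex.exp_add, Complex.exp_log hvne, Complex.exp_log (div_ne_zero hune hvne),
      mul_comm, div_mul_cancel₀ _ hvne]
  have hΛanal : ∀ k, k ≤ N → AnalyticOnNhd ℂ (Λ k) (B k) := by
    intro k hk z hz
    apply AnalyticAt.add analyticAt_const
    exact AnalyticAt.comp (f := fun w => W w / W ((x k : ℝ) : ℂ))
      (analyticAt_clog (hratio k hk z hz))
      ((hW z (hBV k hk hz)).div analyticAt_const (hWzK _ (hxkK k hk)))
  -- midpoints
  set p : ℕ → ℂ := fun k => ((x k + h/2 : ℝ) : ℂ) with hp_def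
  have hdistreal : ∀ u v : ℝ, dist ((u : ℝ) : ℂ) ((v : ℝ) : ℂ) = |u - v| := by
    intro u v
    rw [Complex.dist_eq, ← Complex.ofReal_sub, Complex.norm_real, Real.norm_eq_abs]
  have hxsucc : ∀ k : ℕ, x (k+1) = x k + h := by
    intro k
    simp only [hx_def]
    push_cast
    ring
  have hpmem : ∀ k : ℕ, k + 1 ≤ N → p k ∈ B k ∩ B (k+1) := by
    intro k hk
    constructor
    · rw [hB_def]
      simp only [Metric.mem_ball, hp_def]
      rw [hdistreal]
      rw [_root_.abs_of_nonneg (by linarith)]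
      linarith
    · rw [hB_def]
      simp only [Metric.mem_ball, hp_def]
      rw [hdistreal, hxsucc]
      rw [_root_.abs_of_nonpos (by linarith)]
      linarith
  -- adjusted logarithms
  set c : ℕ → ℂ := fun k => ∑ j ∈ Finset.range k, (Λ j (p j) - Λ (j+1) (p j)) with hc_def
  set Λ' : ℕ → ℂ → ℂ := fun k z => Λ k z + c k with hΛ'_def
  have hexpc : ∀ k, k ≤ N → Complex.exp (c k) = 1 := by
    intro k hk
    rw [hc_def]
    simp only
    rw [Complex.exp_sum]
    apply Finset.prod_eq_one
    intro j hj
    have hjk : j + 1 ≤ N := le_trans (Finset.mem_range.1 hj) hk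
    rw [Complex.exp_sub, hΛexp j (le_trans (Nat.le_succ j) hjk) (p j) (hpmem j hjk).1,
      hΛexp (j+1) hjk (p j) (hpmem j hjk).2, div_self (hWzK _ (hBK _ hjk (hpmem j hjk).2))]
  have hΛ'exp : ∀ k, k ≤ N → ∀ z ∈ B k, Complex.exp (Λ' k z) = W z := by
    intro k hk z hz
    rw [hΛ'_def]
    simp only
    rw [Complex.exp_add, hexpc k hk, mul_one, hΛexp k hk z hz]
  have hΛ'anal : ∀ k, k ≤ N → AnalyticOnNhd ℂ (Λ' k) (B k) :=
    fun k hk z hz => ((hΛanal k hk z hz).add analyticAt_const)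
  -- adjacent consistency
  have hadj : ∀ k, k + 1 ≤ N → ∀ z ∈ B k ∩ B (k+1), Λ' k z = Λ' (k+1) z := by
    intro k hk z hz
    have hpre : IsPreconnected (B k ∩ B (k+1)) :=
      ((convex_ball _ _).inter (convex_ball _ _)).isPreconnected
    have hconst := const_of_exp_eq hpre
      (((hΛanal k (le_trans (Nat.le_succ k) hk)).continuousOn).mono inter_subset_left)
      (((hΛanal (k+1) hk).continuousOn).mono inter_subset_right)
      (fun w hw => by
        rw [hΛexp k (le_trans (Nat.le_succ k) hk) w hw.1, hΛexp (k+1) hk w hw.2])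
      hz (hpmem k hk)
    have hcsucc : c (k+1) = c k + (Λ k (p k) - Λ (k+1) (p k)) := by
      rw [hc_def]; simp only; rw [Finset.sum_range_succ]
    rw [hΛ'_def]
    simp only
    rw [hcsucc]
    have : Λ k z - Λ (k+1) z = Λ k (p k) - Λ (k+1) (p k) := hconst
    linear_combination this
  -- distinct non-adjacent balls are disjoint
  have hdisj : ∀ k l : ℕ, k + 2 ≤ l → ∀ z, z ∈ B k → z ∈ B l → False := by
    intro k l hkl z hzk hzl
    have hd : dist ((x k : ℝ) : ℂ) ((x l : ℝ) : ℂ) = (l - k : ℝ) * h := by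
      rw [hdistreal]
      have : x l - x k = (l - k : ℝ) * h := by
        simp only [hx_def]; push_cast; ring
      have hklr : (k : ℝ) ≤ l := by exact_mod_cast (by omega : k ≤ l)
      rw [abs_sub_comm, this, _root_.abs_of_nonneg (by nlinarith)]
    have h2 : (2 : ℝ) ≤ (l - k : ℝ) := by
      have : (k + 2 : ℝ) ≤ l := by exact_mod_cast hkl
      linarith
    have htri : dist ((x k : ℝ) : ℂ) ((x l : ℝ) : ℂ) ≤ dist z ((x k : ℝ) : ℂ) + dist z ((x l : ℝ) : ℂ) :=
      dist_triangle_left _ _ _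
    have hzk' := Metric.mem_ball.1 hzk
    have hzl' := Metric.mem_ball.1 hzl
    nlinarith
  -- pairwise consistency
  have hpair : ∀ k, k ≤ N → ∀ l, l ≤ N → ∀ z, z ∈ B k → z ∈ B l → Λ' k z = Λ' l z := by
    have key : ∀ k l, k ≤ l → l ≤ N → ∀ z, z ∈ B k → z ∈ B l → Λ' k z = Λ' l z := by
      intro k l hkl hlN z hzk hzl
      rcases Nat.lt_or_ge l (k+2) with hl | hl
      · have : l = k ∨ l = k + 1 := by omega
        rcases this with rfl | rfl
        · rfl
        · exact hadj k hlN z ⟨hzk, hzl⟩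
      · exact absurd hzl (fun hz => hdisj k l hl z hzk hz)
    intro k hk l hl z hzk hzl
    rcases le_total k l with hkl | hlk
    · exact key k l hkl hl z hzk hzl
    · exact (key l k hlk hk z hzl hzk).symm
  -- the glued logarithm
  set Ω : Set ℂ := ⋃ (k : ℕ) (_ : k ≤ N), B k with hΩ_def
  have hmemΩ : ∀ z, z ∈ Ω ↔ ∃ k, k ≤ N ∧ z ∈ B k := by
    intro z
    simp [hΩ_def, Set.mem_iUnion]
  set Φ : ℂ → ℂ := fun z => if hz : ∃ k, k ≤ N ∧ z ∈ B k then Λ' (Nat.find hz) z else 0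
    with hΦ_def
  have hΦeq : ∀ k, k ≤ N → ∀ z ∈ B k, Φ z = Λ' k z := by
    intro k hk z hz
    have hex : ∃ j, j ≤ N ∧ z ∈ B j := ⟨k, hk, hz⟩
    rw [hΦ_def]
    simp only
    rw [dif_pos hex]
    obtain ⟨hfind1, hfind2⟩ := Nat.find_spec hex
    exact hpair _ hfind1 k hk z hfind2 hz
  refine ⟨Ω, Φ, ?_, ?_, ?_, ?_, ?_, ?_⟩
  · exact isOpen_iUnion fun k => isOpen_iUnion fun _ => Metric.isOpen_ball
  · -- the segment is covered
    intro t ht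
    rw [hmemΩ]
    have h1 : (0:ℝ) ≤ (t - a)/h := div_nonneg (by linarith [ht.1]) hhpos.le
    have h2 : (t - a)/h ≤ (N : ℝ) := by
      rw [div_le_iff₀ hhpos]
      have : (N : ℝ) * h = b - a := by rw [hh_def]; field_simp
      rw [this]
      linarith [ht.2]
    refine ⟨⌊(t - a)/h⌋₊, ?_, ?_⟩
    · have := Nat.floor_le_floor (R := ℝ) h2
      rwa [Nat.floor_natCast] at this
    · rw [hB_def]
      simp only [Metric.mem_ball]
      rw [hdistreal]
      have hfl : (⌊(t - a)/h⌋₊ : ℝ) ≤ (t - a)/h := Nat.floor_le h1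
      have hfl2 : (t - a)/h < ⌊(t - a)/h⌋₊ + 1 := Nat.lt_floor_add_one _
      rw [_root_.abs_of_nonneg]
      · simp only [hx_def]
        rw [div_lt_iff₀ hhpos] at hfl2
        nlinarith [hfl2]
      · simp only [hx_def]
        rw [le_div_iff₀ hhpos] at hfl
        linarith
  · -- Ω ⊆ V
    intro z hz
    rw [hmemΩ] at hz
    obtain ⟨k, hk, hzk⟩ := hz
    exact hBV k hk hzk
  · -- conj symmetry
    intro z hz
    rw [hmemΩ] at hz ⊢
    obtain ⟨k, hk, hzk⟩ := hz
    refine ⟨k, hk, ?_⟩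
    rw [hB_def]
    simp only [Metric.mem_ball] at hzk ⊢
    have h1 : dist ((starRingEnd ℂ) z) ((x k : ℝ) : ℂ) = dist z ((x k : ℝ) : ℂ) := by
      have := Complex.dist_conj_conj z ((x k : ℝ) : ℂ)
      rwa [Complex.conj_ofReal] at this
    rwa [h1]
  · -- analyticity
    intro z hz
    rw [hmemΩ] at hz
    obtain ⟨k, hk, hzk⟩ := hz
    apply (hΛ'anal k hk z hzk).congr
    filter_upwards [Metric.isOpen_ball.mem_nhds hzk] with w hw
    exact (hΦeq k hk w hw).symm
  · -- exponential
    intro z hz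
    rw [hmemΩ] at hz
    obtain ⟨k, hk, hzk⟩ := hz
    rw [hΦeq k hk z hzk]
    exact hΛ'exp k hk z hzk

lemma polar_exists (a b : ℝ) (hab : a < b) (f : ℝ → ℂ)
    (hf : RealAnalyticOnIcc a b f) (hne : ¬ ∀ t ∈ Set.Icc a b, f t = 0) :
    ∃ U φ : ℝ → ℝ,
      RealAnalyticOnIcc a b (fun t => (U t : ℂ)) ∧
      RealAnalyticOnIcc a b (fun t => (φ t : ℂ)) ∧
      ∀ t ∈ Set.Icc a b, f t = (U t : ℂ) * Complex.exp (Complex.I * φ t) := by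
  classical
  obtain ⟨V, hV, hsubV, F, hF, hFf⟩ := hf
  obtain ⟨ε, hε, hVtube⟩ := polarTube_subset hV hsubV
  push_neg at hne
  obtain ⟨t₀, ht₀, hft₀⟩ := hne
  have hFt₀ : F ((t₀ : ℝ) : ℂ) ≠ 0 := by rw [hFf t₀ ht₀]; exact hft₀
  set seg : Set ℂ := (fun s : ℝ => (s : ℂ)) '' Set.Icc a b with hseg_def
  have hsegc : IsCompact seg := isCompact_Icc.image Complex.continuous_ofReal
  set R : Set ℂ := polarTube a b ε with hR_def
  have hRopen : IsOpen R := polarTube_isOpen a b ε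
  have hRpre : IsPreconnected R := polarTube_isPreconnected hab.le hε
  have hRV : R ⊆ V := hVtube
  have hFR : AnalyticOnNhd ℂ F R := fun z hz => hF z (hRV hz)
  have ht₀R : ((t₀ : ℝ) : ℂ) ∈ R := mem_polarTube_self ε hε ht₀
  -- a compact neighborhood inside R
  set K : Set ℂ := Metric.cthickening (ε/2) seg with hK_def
  have hKc : IsCompact K := hsegc.cthickening
  have hKR : K ⊆ R := by
    intro z hz
    have h1 : z ∈ Metric.thickening ε seg :=
      Metric.cthickening_subset_thickening' hε (half_lt_self hε) seg hz
    rw [Metric.mem_thickening_iff] at h1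
    obtain ⟨y, ⟨t, ht, rfl⟩, hd⟩ := h1
    exact Set.mem_biUnion ht (Metric.mem_ball.2 hd)
  -- zeros in K are finite
  have hZfin : {z ∈ K | F z = 0}.Finite :=
    zeros_finite hRpre hFR ht₀R hFt₀ hKc hKR
  -- real zeros
  set Tset : Set ℂ := {z ∈ K | F z = 0} ∩ seg with hTset_def
  have hTfin : Tset.Finite := hZfin.subset Set.inter_subset_left
  set TF : Finset ℂ := hTfin.toFinset with hTF_def
  have hmemTF : ∀ s, s ∈ TF ↔ s ∈ Tset := fun s => hTfin.mem_toFinset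
  -- non-real zeros are at positive distance from the segment
  set S' : Set ℂ := {z ∈ K | F z = 0} \ seg with hS'_def
  have hS'fin : S'.Finite := hZfin.subset Set.diff_subset
  have hS'pos : ∀ s ∈ S', 0 < Metric.infDist s seg := by
    intro s hs
    rw [← IsClosed.notMem_iff_infDist_pos hsegc.isClosed ⟨(a : ℂ), a, Set.left_mem_Icc.2 hab.le, rfl⟩]
    exact hs.2
  have hη : ∃ η > 0, ∀ s ∈ S', η ≤ Metric.infDist s seg := by
    set T2 : Finset ℝ := insert 1 (hS'fin.toFinset.image (fun s => Metric.infDist s seg))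
      with hT2_def
    have hT2ne : T2.Nonempty := ⟨1, Finset.mem_insert_self _ _⟩
    refine ⟨T2.min' hT2ne, ?_, ?_⟩
    · have : ∀ y ∈ T2, 0 < y := by
        intro y hy
        rcases Finset.mem_insert.1 hy with rfl | hy
        · norm_num
        · obtain ⟨s, hs, rfl⟩ := Finset.mem_image.1 hy
          exact hS'pos s (hS'fin.mem_toFinset.1 hs)
      exact this _ (T2.min'_mem hT2ne)
    · intro s hs
      apply Finset.min'_le
      exact Finset.mem_insert_of_mem (Finset.mem_image_of_mem _ (hS'fin.mem_toFinset.2 hs))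
  obtain ⟨η, hηpos, hηle⟩ := hη
  set ε'' : ℝ := min (ε/2) (η/2) with hε''_def
  have hε''pos : 0 < ε'' := lt_min (half_pos hε) (half_pos hηpos)
  set R' : Set ℂ := polarTube a b ε'' with hR'_def
  have hR'K : R' ⊆ K := by
    intro z hz
    rcases Set.mem_iUnion₂.1 hz with ⟨t, ht, hzt⟩
    rw [hK_def]
    exact Metric.mem_cthickening_of_dist_le z ((t : ℝ) : ℂ) (ε/2) seg ⟨t, ht, rfl⟩
      (le_trans (Metric.mem_ball.1 hzt).le (min_le_left _ _))
  have hR'R : R' ⊆ R := polarTube_mono (le_trans (min_le_left _ _) (by linarith))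
  have hR'V : R' ⊆ V := hR'R.trans hRV
  have hR'open : IsOpen R' := polarTube_isOpen a b ε''
  have hR'real : ∀ t ∈ Set.Icc a b, ((t : ℝ) : ℂ) ∈ R' := fun t ht =>
    mem_polarTube_self ε'' hε''pos ht
  -- all zeros of F in R' are real and belong to TF
  have hzero_mem : ∀ z ∈ R', F z = 0 → z ∈ TF := by
    intro z hz hFz
    have hzK : z ∈ K := hR'K hz
    have : z ∈ seg := by
      by_contra hcon
      have hzS' : z ∈ S' := ⟨⟨hzK, hFz⟩, hcon⟩
      have h1 : Metric.infDist z seg < ε'' := by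
        rcases Set.mem_iUnion₂.1 hz with ⟨t, ht, hzt⟩
        exact lt_of_le_of_lt (Metric.infDist_le_dist_of_mem ⟨t, ht, rfl⟩)
          (Metric.mem_ball.1 hzt)
      have h2 := hηle z hzS'
      have : ε'' ≤ η/2 := min_le_right _ _
      linarith
    exact (hmemTF z).2 ⟨⟨hzK, hFz⟩, this⟩
  have hTFzero : ∀ s ∈ TF, F s = 0 := fun s hs => ((hmemTF s).1 hs).1.2
  have hTFseg : ∀ s ∈ TF, s ∈ seg := fun s hs => ((hmemTF s).1 hs).2
  have hTFconj : ∀ s ∈ TF, (starRingEnd ℂ) s = s := by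
    intro s hs
    obtain ⟨t, _, rfl⟩ := hTFseg s hs
    exact Complex.conj_ofReal t
  have hTFV : ∀ s ∈ TF, s ∈ V := by
    intro s hs
    obtain ⟨t, ht, rfl⟩ := hTFseg s hs
    exact hsubV t ht
  -- not eventually zero anywhere in R
  have hnotev : ∀ z ∈ R, ¬ (∀ᶠ w in nhds z, F w = 0) := by
    intro z hz hev
    have hfreq : ∃ᶠ w in nhdsWithin z {z}ᶜ, F w = 0 :=
      (hev.filter_mono nhdsWithin_le_nhds).frequently
    have := hFR.eqOn_zero_of_preconnected_of_frequently_eq_zero hRpre hz hfreq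
    exact hFt₀ (this ht₀R)
  -- local factorizations at the zeros
  have hord : ∀ s ∈ TF, ∃ (mn : ℕ) (g : ℂ → ℂ), AnalyticAt ℂ g s ∧ g s ≠ 0 ∧ mn ≠ 0 ∧
      ∀ᶠ w in nhds s, F w = (w - s)^mn * g w := by
    intro s hs
    have hsR : s ∈ R := hKR (((hmemTF s).1 hs).1.1)
    have hFs : AnalyticAt ℂ F s := hF s (hRV hsR)
    have hne_top : analyticOrderAt F s ≠ ⊤ := fun htop =>
      hnotev s hsR (analyticOrderAt_eq_top.1 htop)
    obtain ⟨mn, hmn⟩ := WithTop.ne_top_iff_exists.1 hne_top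
    have hmn' : analyticOrderAt F s = (mn : ℕ) := hmn.symm
    rw [hFs.analyticOrderAt_eq_natCast] at hmn'
    obtain ⟨g, hg, hgs, hev⟩ := hmn'
    refine ⟨mn, g, hg, hgs, ?_, ?_⟩
    · intro h0
      apply hgs
      have h1 := hev.self_of_nhds
      rw [h0, pow_zero, one_smul] at h1
      rw [← h1]
      exact hTFzero s hs
    · filter_upwards [hev] with w hw
      rw [hw, smul_eq_mul]
  choose! mdeg g hg hgs hm0 hev using hord
  -- the polynomial part and the unit part
  set P : ℂ → ℂ := fun z => ∏ s ∈ TF, (z - s)^(mdeg s) with hP_def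
  have hPdiff : Differentiable ℂ P :=
    Differentiable.fun_finsetProd fun i _ => (differentiable_id.sub_const i).pow _
  have hPanal : ∀ z : ℂ, AnalyticAt ℂ P z := fun z => hPdiff.analyticAt z
  have hPne : ∀ z : ℂ, z ∉ TF → P z ≠ 0 := by
    intro z hz
    rw [hP_def]
    apply Finset.prod_ne_zero_iff.2
    intro s hs
    exact pow_ne_zero _ (sub_ne_zero_of_ne (fun h => hz (h ▸ hs)))
  set Q : ℂ → ℂ := fun z =>
    if hz : z ∈ TF then g z z / ∏ r ∈ TF.erase z, (z - r)^(mdeg r) else F z / P z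
    with hQ_def
  have hQTF : ∀ s ∈ TF, Q s = g s s / ∏ r ∈ TF.erase s, (s - r)^(mdeg r) := by
    intro s hs
    rw [hQ_def]
    simp only
    rw [dif_pos hs]
  have hQnotTF : ∀ z, z ∉ TF → Q z = F z / P z := by
    intro z hz
    rw [hQ_def]
    simp only
    rw [dif_neg hz]
  have herasene : ∀ s ∈ TF, (∏ r ∈ TF.erase s, (s - r)^(mdeg r)) ≠ 0 := by
    intro s hs
    apply Finset.prod_ne_zero_iff.2
    intro r hr
    exact pow_ne_zero _ (sub_ne_zero_of_ne (Ne.symm (Finset.mem_erase.1 hr).1))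
  have hQanal : AnalyticOnNhd ℂ Q R' := by
    intro z hz
    by_cases hzTF : z ∈ TF
    · -- removable singularity
      have hW : AnalyticAt ℂ (fun w => g z w / ∏ r ∈ TF.erase z, (w - r)^(mdeg r)) z := by
        apply (hg z hzTF).div
        · exact (Differentiable.fun_finsetProd
            (fun i _ => (differentiable_id.sub_const i).pow _)).analyticAt z
        · exact herasene z hzTF
      apply hW.congr
      have hopen : IsOpen ((↑(TF.erase z) : Set ℂ))ᶜ :=
        (Set.Finite.isClosed (TF.erase z).finite_toSet).isOpen_compl
      have hmem : ((↑(TF.erase z) : Set ℂ))ᶜ ∈ nhds z := by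
        apply hopen.mem_nhds
        simp
      filter_upwards [hev z hzTF, hmem] with w hw1 hw2
      by_cases hws : w = z
      · subst hws
        rw [hQTF w hzTF]
      · have hwTF : w ∉ TF := by
          intro hcon
          apply hw2
          simp only [Finset.coe_erase, Set.mem_diff, Set.mem_singleton_iff]
          exact ⟨hcon, hws⟩
        rw [hQnotTF w hwTF, hw1]
        have hPw : P w = (w - z)^(mdeg z) * ∏ r ∈ TF.erase z, (w - r)^(mdeg r) := by
          rw [hP_def]
          exact (Finset.mul_prod_erase TF _ hzTF).symm
        rw [hPw]
        rw [mul_div_mul_left _ _ (pow_ne_zero _ (sub_ne_zero_of_ne hws))]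
    · have hWa : AnalyticAt ℂ (fun w => F w / P w) z :=
        (hF z (hR'V hz)).div (hPanal z) (hPne z hzTF)
      apply hWa.congr
      have hopen : IsOpen ((↑TF : Set ℂ))ᶜ :=
        (Set.Finite.isClosed TF.finite_toSet).isOpen_compl
      filter_upwards [hopen.mem_nhds hzTF] with w hw
      exact (hQnotTF w hw).symm
  have hQne : ∀ z ∈ R', Q z ≠ 0 := by
    intro z hz
    by_cases hzTF : z ∈ TF
    · rw [hQTF z hzTF]
      exact div_ne_zero (hgs z hzTF) (herasene z hzTF)
    · rw [hQnotTF z hzTF]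
      have hFz : F z ≠ 0 := fun h0 => hzTF (hzero_mem z hz h0)
      exact div_ne_zero hFz (hPne z hzTF)
  have hFPQ : ∀ z ∈ R', F z = P z * Q z := by
    intro z hz
    by_cases hzTF : z ∈ TF
    · have hPz : P z = 0 := by
        rw [hP_def]
        exact Finset.prod_eq_zero hzTF (by rw [sub_self]; exact zero_pow (hm0 z hzTF))
      rw [hTFzero z hzTF, hPz, zero_mul]
    · rw [hQnotTF z hzTF, mul_comm, div_mul_cancel₀ _ (hPne z hzTF)]
  -- take a logarithm of Q
  obtain ⟨Ω, Φ, hΩopen, hΩreal, hΩR', hΩconj, hΦanal, hΦexp⟩ :=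
    exists_log a b hab hR'open hR'real hQanal hQne
  -- the conjugate-reflected logarithm
  have hΦstar : AnalyticOnNhd ℂ (fun z => (starRingEnd ℂ) (Φ ((starRingEnd ℂ) z))) Ω :=
    analyticOnNhd_conj_conj hΩopen hΩconj hΦanal
  set A : ℂ → ℂ := fun z => (Φ z + (starRingEnd ℂ) (Φ ((starRingEnd ℂ) z))) / 2 with hA_def
  set Bf : ℂ → ℂ := fun z => (Φ z - (starRingEnd ℂ) (Φ ((starRingEnd ℂ) z))) / (2 * Complex.I)
    with hBf_def
  have hAanal : AnalyticOnNhd ℂ A Ω := fun z hz =>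
    ((hΦanal z hz).add (hΦstar z hz)).div analyticAt_const two_ne_zero
  have hBanal : AnalyticOnNhd ℂ Bf Ω := fun z hz =>
    ((hΦanal z hz).sub (hΦstar z hz)).div analyticAt_const
      (mul_ne_zero two_ne_zero Complex.I_ne_zero)
  have hAre : ∀ t : ℝ, A ((t : ℝ) : ℂ) = ((Φ ((t : ℝ) : ℂ)).re : ℂ) := by
    intro t
    rw [hA_def]
    simp only [Complex.conj_ofReal]
    rw [Complex.add_conj]
    norm_num
  have hBre : ∀ t : ℝ, Bf ((t : ℝ) : ℂ) = ((Φ ((t : ℝ) : ℂ)).im : ℂ) := by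
    intro t
    rw [hBf_def]
    simp only [Complex.conj_ofReal]
    rw [Complex.sub_conj]
    have h2I : (2 : ℂ) * Complex.I ≠ 0 := mul_ne_zero two_ne_zero Complex.I_ne_zero
    field_simp
    push_cast
    ring
  have hPreal : ∀ t : ℝ, ((P ((t : ℝ) : ℂ)).re : ℂ) = P ((t : ℝ) : ℂ) := by
    intro t
    apply Complex.conj_eq_iff_re.1
    rw [hP_def]
    simp only
    rw [map_prod]
    apply Finset.prod_congr rfl
    intro s hs
    rw [map_pow, map_sub, Complex.conj_ofReal, hTFconj s hs]
  -- the real functions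
  refine ⟨fun t => (P ((t : ℝ) : ℂ)).re * Real.exp ((Φ ((t : ℝ) : ℂ)).re),
    fun t => (Φ ((t : ℝ) : ℂ)).im, ?_, ?_, ?_⟩
  · refine ⟨Ω, hΩopen, hΩreal, fun z => P z * Complex.exp (A z), ?_, ?_⟩
    · exact fun z hz => (hPanal z).mul
        ((Complex.differentiable_exp.analyticAt (A z)).comp (hAanal z hz))
    · intro t ht
      show P ((t : ℝ) : ℂ) * Complex.exp (A ((t : ℝ) : ℂ))
        = ((((P ((t : ℝ) : ℂ)).re * Real.exp ((Φ ((t : ℝ) : ℂ)).re) : ℝ)) : ℂ)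
      rw [hAre t, Complex.ofReal_mul, Complex.ofReal_exp, hPreal t]
  · refine ⟨Ω, hΩopen, hΩreal, Bf, hBanal, ?_⟩
    intro t ht
    exact hBre t
  · intro t ht
    have h1 : f t = F ((t : ℝ) : ℂ) := (hFf t ht).symm
    have h2 : F ((t : ℝ) : ℂ) = P ((t : ℝ) : ℂ) * Q ((t : ℝ) : ℂ) :=
      hFPQ _ (hR'real t ht)
    have h3 : Q ((t : ℝ) : ℂ) = Complex.exp (Φ ((t : ℝ) : ℂ)) :=
      (hΦexp _ (hΩreal t ht)).symm
    rw [h1, h2, h3]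
    show P ((t : ℝ) : ℂ) * Complex.exp (Φ ((t : ℝ) : ℂ))
      = ((((P ((t : ℝ) : ℂ)).re * Real.exp ((Φ ((t : ℝ) : ℂ)).re) : ℝ)) : ℂ)
        * Complex.exp (Complex.I * ((Φ ((t : ℝ) : ℂ)).im : ℂ))
    rw [Complex.ofReal_mul, Complex.ofReal_exp, hPreal t, mul_assoc, ← Complex.exp_add]
    have h4 : Φ ((t : ℝ) : ℂ) = ((Φ ((t : ℝ) : ℂ)).re : ℂ)
        + Complex.I * ((Φ ((t : ℝ) : ℂ)).im : ℂ) := by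
      rw [mul_comm]
      exact (Complex.re_add_im _).symm
    rw [← h4]

/-- Density argument: a property that is closed on `[a,b]` and holds off a finite set
holds everywhere on `[a,b]`. -/
lemma forall_of_finite_compl {a b : ℝ} (hab : a < b) {Z : Set ℝ} (hZ : Z.Finite)
    {p : ℝ → Prop} (hclosed : IsClosed {t | t ∈ Set.Icc a b ∧ p t})
    (hp : ∀ t ∈ Set.Icc a b, t ∉ Z → p t) : ∀ t ∈ Set.Icc a b, p t := by
  intro t ht
  have hcl : t ∈ closure {t | t ∈ Set.Icc a b ∧ p t} := by
    rw [_root_.mem_closure_iff]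
    intro o ho hto
    obtain ⟨δ, hδ, hball⟩ := Metric.isOpen_iff.1 ho t hto
    have hlt : max a (t - δ) < min b (t + δ) := by
      rcases ht with ⟨h1, h2⟩
      apply max_lt <;> apply lt_min <;> linarith
    have hioo : (Set.Ioo (max a (t - δ)) (min b (t + δ))).Infinite := Set.Ioo_infinite hlt
    obtain ⟨s, hsJ, hsZ⟩ := (hioo.diff hZ).nonempty
    refine ⟨s, hball ?_, ?_, ?_⟩
    · rw [Metric.mem_ball, Real.dist_eq, abs_lt]
      rcases hsJ with ⟨hs1, hs2⟩
      constructor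
      · have := le_max_right a (t - δ); linarith
      · have := min_le_right b (t + δ); linarith
    · rcases hsJ with ⟨hs1, hs2⟩
      have h1 := le_max_left a (t - δ)
      have h2 := min_le_left b (t + δ)
      exact ⟨by linarith, by linarith⟩
    · exact hp s (by
        rcases hsJ with ⟨hs1, hs2⟩
        have h1 := le_max_left a (t - δ)
        have h2 := min_le_left b (t + δ)
        exact ⟨by linarith, by linarith⟩) hsZ
  rw [hclosed.closure_eq] at hcl
  exact hcl.2

/-- Identity theorem from infinitely many real zeros. -/
lemma eqOn_zero_of_real_zeros {a b : ℝ} (hab : a ≤ b) {ε : ℝ} (hε : 0 < ε) {G : ℂ → ℂ}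
    (hG : AnalyticOnNhd ℂ G (polarTube a b ε)) {S : Set ℝ} (hS : S.Infinite)
    (hSsub : S ⊆ Set.Icc a b) (hzero : ∀ t ∈ S, G ((t : ℝ) : ℂ) = 0) :
    ∀ z ∈ polarTube a b ε, G z = 0 := by
  obtain ⟨x, hxIcc, hacc⟩ := hS.exists_accPt_of_subset_isCompact isCompact_Icc hSsub
  have hfreqR : ∃ᶠ y in nhdsWithin x {x}ᶜ, y ∈ S := by
    rw [frequently_nhdsWithin_iff]
    exact (accPt_iff_frequently.1 hacc).mono fun y hy => ⟨hy.2, hy.1⟩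
  have htend : Filter.Tendsto (fun s : ℝ => (s : ℂ)) (nhdsWithin x {x}ᶜ)
      (nhdsWithin ((x : ℝ) : ℂ) {((x : ℝ) : ℂ)}ᶜ) := by
    apply ContinuousWithinAt.tendsto_nhdsWithin
      (Complex.continuous_ofReal.continuousWithinAt)
    intro y hy
    simp only [Set.mem_compl_iff, Set.mem_singleton_iff] at hy ⊢
    exact_mod_cast hy
  have hfreqC : ∃ᶠ z in nhdsWithin ((x : ℝ) : ℂ) {((x : ℝ) : ℂ)}ᶜ, G z = 0 :=
    htend.frequently (hfreqR.mono fun y hy => hzero y hy)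
  exact fun z hz => hG.eqOn_zero_of_preconnected_of_frequently_eq_zero
    (polarTube_isPreconnected hab hε) (mem_polarTube_self ε hε hxIcc) hfreqC hz

lemma polar_unique (a b : ℝ) (hab : a < b) (f : ℝ → ℂ)
    (hne : ¬ ∀ t ∈ Set.Icc a b, f t = 0)
    (U₁ φ₁ U₂ φ₂ : ℝ → ℝ)
    (hU₁ : RealAnalyticOnIcc a b (fun t => (U₁ t : ℂ)))
    (hφ₁ : RealAnalyticOnIcc a b (fun t => (φ₁ t : ℂ)))
    (hU₂ : RealAnalyticOnIcc a b (fun t => (U₂ t : ℂ)))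
    (hφ₂ : RealAnalyticOnIcc a b (fun t => (φ₂ t : ℂ)))
    (hf1 : ∀ t ∈ Set.Icc a b, f t = (U₁ t : ℂ) * Complex.exp (Complex.I * φ₁ t))
    (hf2 : ∀ t ∈ Set.Icc a b, f t = (U₂ t : ℂ) * Complex.exp (Complex.I * φ₂ t)) :
    (∃ k : ℤ, (∀ t ∈ Set.Icc a b, U₁ t = U₂ t) ∧
      (∀ t ∈ Set.Icc a b, φ₁ t - φ₂ t = 2 * k * Real.pi)) ∨
    (∃ k : ℤ, (∀ t ∈ Set.Icc a b, U₁ t = -U₂ t) ∧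
      (∀ t ∈ Set.Icc a b, φ₁ t - φ₂ t = (2 * k + 1) * Real.pi)) := by
  classical
  obtain ⟨V₁, hV₁, hs₁, F₁, hF₁, hFU₁0⟩ := hU₁
  obtain ⟨V₂, hV₂, hs₂, F₂, hF₂, hFU₂0⟩ := hU₂
  obtain ⟨W₁, hW₁, hw₁, G₁, hG₁, hGφ₁0⟩ := hφ₁
  obtain ⟨W₂, hW₂, hw₂, G₂, hG₂, hGφ₂0⟩ := hφ₂
  have hFU₁ : ∀ t ∈ Set.Icc a b, F₁ ((t : ℝ) : ℂ) = ((U₁ t : ℝ) : ℂ) :=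
    fun t ht => hFU₁0 t ht
  have hFU₂ : ∀ t ∈ Set.Icc a b, F₂ ((t : ℝ) : ℂ) = ((U₂ t : ℝ) : ℂ) :=
    fun t ht => hFU₂0 t ht
  have hGφ₁ : ∀ t ∈ Set.Icc a b, G₁ ((t : ℝ) : ℂ) = ((φ₁ t : ℝ) : ℂ) :=
    fun t ht => hGφ₁0 t ht
  have hGφ₂ : ∀ t ∈ Set.Icc a b, G₂ ((t : ℝ) : ℂ) = ((φ₂ t : ℝ) : ℂ) :=
    fun t ht => hGφ₂0 t ht
  -- continuity of the phases
  have hφcont : ∀ (W : Set ℂ) (G : ℂ → ℂ) (φ : ℝ → ℝ),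
      (∀ t ∈ Set.Icc a b, ((t : ℝ) : ℂ) ∈ W) → AnalyticOnNhd ℂ G W →
      (∀ t ∈ Set.Icc a b, G ((t : ℝ) : ℂ) = ((φ t : ℝ) : ℂ)) →
      ContinuousOn φ (Set.Icc a b) := by
    intro W G φ hWr hGa hGφ
    have h1 : ContinuousOn (fun t : ℝ => (G ((t : ℝ) : ℂ)).re) (Set.Icc a b) := by
      apply Complex.continuous_re.comp_continuousOn
      exact hGa.continuousOn.comp Complex.continuous_ofReal.continuousOn
        (fun t ht => hWr t ht)
    apply h1.congr
    intro t ht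
    show φ t = (G ((t : ℝ) : ℂ)).re
    rw [hGφ t ht]
    simp
  have hφ₁c := hφcont W₁ G₁ φ₁ hw₁ hG₁ hGφ₁
  have hφ₂c := hφcont W₂ G₂ φ₂ hw₂ hG₂ hGφ₂
  have hψc : ContinuousOn (fun t => φ₁ t - φ₂ t) (Set.Icc a b) := hφ₁c.sub hφ₂c
  -- equality of moduli
  have hmod : ∀ t ∈ Set.Icc a b, |U₁ t| = |U₂ t| := by
    have habs : ∀ (U φ : ℝ → ℝ), ∀ t ∈ Set.Icc a b,
        (f t = (U t : ℂ) * Complex.exp (Complex.I * φ t)) → ‖f t‖ = |U t| := by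
      intro U φ t ht hfeq
      rw [hfeq, norm_mul, Complex.norm_real, Real.norm_eq_abs, Complex.norm_exp]
      have : (Complex.I * ((φ t : ℝ) : ℂ)).re = 0 := by simp
      rw [this, Real.exp_zero, mul_one]
    intro t ht
    rw [← habs U₁ φ₁ t ht (hf1 t ht), habs U₂ φ₂ t ht (hf2 t ht)]
  -- a point where f does not vanish
  push_neg at hne
  obtain ⟨t₁, ht₁, hft₁⟩ := hne
  have hU₂t₁ : U₂ t₁ ≠ 0 := by
    intro h0; apply hft₁; rw [hf2 t₁ ht₁, h0]; simp
  -- common tube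
  obtain ⟨ε, hε, htube⟩ := polarTube_subset (hV₁.inter hV₂)
    (fun t ht => ⟨hs₁ t ht, hs₂ t ht⟩)
  have hF₁R : AnalyticOnNhd ℂ F₁ (polarTube a b ε) := fun z hz => hF₁ z (htube hz).1
  have hF₂R : AnalyticOnNhd ℂ F₂ (polarTube a b ε) := fun z hz => hF₂ z (htube hz).2
  -- the zero set of U₂ on [a,b] is finite
  set Z : Set ℝ := {t | t ∈ Set.Icc a b ∧ U₂ t = 0} with hZ_def
  have hZfin : Z.Finite := by
    by_contra hinf
    rw [← Set.not_infinite, not_not] at hinf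
    have h0 := eqOn_zero_of_real_zeros hab.le hε hF₂R hinf (fun t ht => ht.1)
      (fun t ht => by rw [hFU₂ t ht.1, ht.2]; simp)
    have := h0 ((t₁ : ℝ) : ℂ) (mem_polarTube_self ε hε ht₁)
    rw [hFU₂ t₁ ht₁] at this
    exact hU₂t₁ (by exact_mod_cast this)
  -- dichotomy
  set S : Set ℝ := {t | t ∈ Set.Icc a b ∧ U₁ t = U₂ t} with hS_def
  set T : Set ℝ := {t | t ∈ Set.Icc a b ∧ U₁ t = -U₂ t} with hT_def
  have hST : Set.Icc a b ⊆ S ∪ T := by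
    intro t ht
    rcases abs_eq_abs.1 (hmod t ht) with h | h
    · exact Or.inl ⟨ht, h⟩
    · exact Or.inr ⟨ht, h⟩
  have hSorT : S.Infinite ∨ T.Infinite := by
    by_contra hcon
    push_neg at hcon
    exact ((Set.Icc_infinite hab).mono hST) (hcon.1.union hcon.2)
  rcases hSorT with hinf | hinf
  · -- even case
    left
    have hFF := eqOn_zero_of_real_zeros hab.le hε (hF₁R.sub hF₂R) hinf
      (fun t ht => ht.1)
      (fun t ht => by
        simp only [Pi.sub_apply]
        rw [hFU₁ t ht.1, hFU₂ t ht.1, ht.2, sub_self])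
    have hU12 : ∀ t ∈ Set.Icc a b, U₁ t = U₂ t := by
      intro t ht
      have := hFF ((t : ℝ) : ℂ) (mem_polarTube_self ε hε ht)
      simp only [Pi.sub_apply] at this
      rw [hFU₁ t ht, hFU₂ t ht, sub_eq_zero] at this
      exact_mod_cast this
    have hptw : ∀ t ∈ Set.Icc a b, t ∉ Z →
        ∃ n : ℤ, φ₁ t - φ₂ t = 2 * Real.pi * n := by
      intro t ht htZ
      have hU2ne : U₂ t ≠ 0 := fun h0 => htZ ⟨ht, h0⟩
      have e1 := hf1 t ht
      rw [hU12 t ht] at e1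
      have h1 : ((U₂ t : ℝ) : ℂ) * Complex.exp (Complex.I * φ₁ t)
          = ((U₂ t : ℝ) : ℂ) * Complex.exp (Complex.I * φ₂ t) := e1.symm.trans (hf2 t ht)
      have h2 := mul_left_cancel₀ (Complex.ofReal_ne_zero.2 hU2ne) h1
      obtain ⟨n, hn⟩ := Complex.exp_eq_exp_iff_exists_int.1 h2
      have hn' : Complex.I * ((φ₁ t : ℝ) : ℂ)
          = Complex.I * (((φ₂ t : ℝ) : ℂ) + (n : ℂ) * (2 * (Real.pi : ℂ))) := by
        rw [hn]; push_cast; ring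
      have hc := mul_left_cancel₀ Complex.I_ne_zero hn'
      have hr : (φ₁ t : ℝ) = φ₂ t + n * (2 * Real.pi) := by exact_mod_cast hc
      exact ⟨n, by linarith⟩
    have hcos1 : ∀ t ∈ Set.Icc a b, Real.cos (φ₁ t - φ₂ t) = 1 := by
      refine forall_of_finite_compl (p := fun t => Real.cos (φ₁ t - φ₂ t) = 1)
        hab hZfin ?_ ?_
      · have hcont : ContinuousOn (fun t => Real.cos (φ₁ t - φ₂ t)) (Set.Icc a b) :=
          Real.continuous_cos.comp_continuousOn hψc
        have h1 := hcont.preimage_isClosed_of_isClosed isClosed_Icc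
          (isClosed_singleton (x := (1 : ℝ)))
        exact h1
      · intro t ht htZ
        obtain ⟨n, hn⟩ := hptw t ht htZ
        rw [hn, show 2 * Real.pi * (n : ℝ) = (n : ℝ) * (2 * Real.pi) by ring]
        exact Real.cos_int_mul_two_pi n
    have heq : ∀ t ∈ Set.Icc a b, ∃ n : ℤ,
        φ₁ t - φ₂ t = 2 * Real.pi * n + 0 := by
      intro t ht
      obtain ⟨n, hn⟩ := (Real.cos_eq_one_iff _).1 (hcos1 t ht)
      exact ⟨n, by linarith⟩
    obtain ⟨k, hk⟩ := heq a (Set.left_mem_Icc.2 hab.le)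
    refine ⟨k, hU12, fun t ht => ?_⟩
    have hconst := int_constant isPreconnected_Icc hψc Real.two_pi_pos heq ht
      (Set.left_mem_Icc.2 hab.le)
    calc φ₁ t - φ₂ t = φ₁ a - φ₂ a := hconst
      _ = 2 * Real.pi * k + 0 := hk
      _ = 2 * k * Real.pi := by ring
  · -- odd case
    right
    have hFF := eqOn_zero_of_real_zeros hab.le hε (hF₁R.add hF₂R) hinf
      (fun t ht => ht.1)
      (fun t ht => by
        simp only [Pi.add_apply]
        rw [hFU₁ t ht.1, hFU₂ t ht.1, ht.2]
        push_cast
        ring)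
    have hU12 : ∀ t ∈ Set.Icc a b, U₁ t = -U₂ t := by
      intro t ht
      have := hFF ((t : ℝ) : ℂ) (mem_polarTube_self ε hε ht)
      simp only [Pi.add_apply] at this
      rw [hFU₁ t ht, hFU₂ t ht, add_eq_zero_iff_eq_neg] at this
      have h2 : ((U₁ t : ℝ) : ℂ) = ((-U₂ t : ℝ) : ℂ) := by
        rw [this]; push_cast; ring
      exact_mod_cast h2
    have hcosm : ∀ t ∈ Set.Icc a b, t ∉ Z →
        Real.cos (φ₁ t - φ₂ t) = -1 := by
      intro t ht htZ
      have hU2ne : U₂ t ≠ 0 := fun h0 => htZ ⟨ht, h0⟩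
      have e1 := hf1 t ht
      rw [hU12 t ht] at e1
      have h1 : ((-U₂ t : ℝ) : ℂ) * Complex.exp (Complex.I * φ₁ t)
          = ((U₂ t : ℝ) : ℂ) * Complex.exp (Complex.I * φ₂ t) := e1.symm.trans (hf2 t ht)
      push_cast at h1
      have hsum : ((U₂ t : ℝ) : ℂ) * (Complex.exp (Complex.I * φ₁ t)
          + Complex.exp (Complex.I * φ₂ t)) = 0 := by
        linear_combination -h1
      have hadd := (mul_eq_zero.1 hsum).resolve_left (Complex.ofReal_ne_zero.2 hU2ne)
      have hcancel : Complex.exp (Complex.I * φ₁ t) = -Complex.exp (Complex.I * φ₂ t) :=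
        eq_neg_of_add_eq_zero_left hadd
      have hexp2 : Complex.exp (((φ₁ t - φ₂ t : ℝ) : ℂ) * Complex.I) = -1 := by
        have harg : ((φ₁ t - φ₂ t : ℝ) : ℂ) * Complex.I
            = Complex.I * φ₁ t - Complex.I * φ₂ t := by push_cast; ring
        rw [harg, Complex.exp_sub, hcancel, neg_div, div_self (Complex.exp_ne_zero _)]
      have h6 : ((Real.cos (φ₁ t - φ₂ t) : ℝ) : ℂ)
          + ((Real.sin (φ₁ t - φ₂ t) : ℝ) : ℂ) * Complex.I = -1 := by
        rw [Complex.ofReal_cos, Complex.ofReal_sin, ← Complex.exp_mul_I]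
        exact hexp2
      have h7 := congrArg Complex.re h6
      simp only [Complex.add_re, Complex.mul_re, Complex.ofReal_re, Complex.ofReal_im,
        Complex.I_re, Complex.I_im, mul_zero, mul_one, zero_mul, sub_zero, zero_sub,
        neg_zero, Complex.neg_re, Complex.one_re] at h7
      linarith [h7]
    have hcosa : ∀ t ∈ Set.Icc a b, Real.cos (φ₁ t - φ₂ t) = -1 := by
      refine forall_of_finite_compl (p := fun t => Real.cos (φ₁ t - φ₂ t) = -1)
        hab hZfin ?_ hcosm
      have hcont : ContinuousOn (fun t => Real.cos (φ₁ t - φ₂ t)) (Set.Icc a b) :=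
        Real.continuous_cos.comp_continuousOn hψc
      have h1 := hcont.preimage_isClosed_of_isClosed isClosed_Icc
        (isClosed_singleton (x := (-1 : ℝ)))
      exact h1
    have heq : ∀ t ∈ Set.Icc a b, ∃ n : ℤ,
        φ₁ t - φ₂ t = 2 * Real.pi * n + Real.pi := by
      intro t ht
      have hc : Real.cos (φ₁ t - φ₂ t - Real.pi) = 1 := by
        rw [Real.cos_sub_pi, hcosa t ht, neg_neg]
      obtain ⟨n, hn⟩ := (Real.cos_eq_one_iff _).1 hc
      exact ⟨n, by linarith⟩
    obtain ⟨k, hk⟩ := heq a (Set.left_mem_Icc.2 hab.le)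
    refine ⟨k, hU12, fun t ht => ?_⟩
    have hconst := int_constant isPreconnected_Icc hψc Real.two_pi_pos heq ht
      (Set.left_mem_Icc.2 hab.le)
    calc φ₁ t - φ₂ t = φ₁ a - φ₂ a := hconst
      _ = 2 * Real.pi * k + Real.pi := hk
      _ = (2 * k + 1) * Real.pi := by ring


theorem polar_representation_exists_and_unique
    (a b : ℝ) (hab : a < b) (f : ℝ → ℂ)
    (hf : RealAnalyticOnIcc a b f)
    (hne : ¬ ∀ t ∈ Set.Icc a b, f t = 0) :
    (∃ U φ : ℝ → ℝ,
      RealAnalyticOnIcc a b (fun t => (U t : ℂ)) ∧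
      RealAnalyticOnIcc a b (fun t => (φ t : ℂ)) ∧
      ∀ t ∈ Set.Icc a b, f t = (U t : ℂ) * Complex.exp (Complex.I * φ t)) ∧
    (∀ U₁ φ₁ U₂ φ₂ : ℝ → ℝ,
      RealAnalyticOnIcc a b (fun t => (U₁ t : ℂ)) →
      RealAnalyticOnIcc a b (fun t => (φ₁ t : ℂ)) →
      RealAnalyticOnIcc a b (fun t => (U₂ t : ℂ)) →
      RealAnalyticOnIcc a b (fun t => (φ₂ t : ℂ)) →
      (∀ t ∈ Set.Icc a b, f t = (U₁ t : ℂ) * Complex.exp (Complex.I * φ₁ t)) →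
      (∀ t ∈ Set.Icc a b, f t = (U₂ t : ℂ) * Complex.exp (Complex.I * φ₂ t)) →
      (∃ k : ℤ, (∀ t ∈ Set.Icc a b, U₁ t = U₂ t) ∧
        (∀ t ∈ Set.Icc a b, φ₁ t - φ₂ t = 2 * k * Real.pi)) ∨
      (∃ k : ℤ, (∀ t ∈ Set.Icc a b, U₁ t = -U₂ t) ∧
        (∀ t ∈ Set.Icc a b, φ₁ t - φ₂ t = (2 * k + 1) * Real.pi))) := by
  constructor
  · exact polar_exists a b hab f hf hne
  · intro U₁ φ₁ U₂ φ₂ h1 h2 h3 h4 h5 h6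
    exact polar_unique a b hab f hne U₁ φ₁ U₂ φ₂ h1 h2 h3 h4 h5 h6
end

section
/- Let a < b be real numbers, let f : [a,b] → ℝ and g : [a,b] → ℂ be real analytic with f(t) = Re g(t) for all t ∈ [a,b], and suppose f is not identically zero on [a,b]. Let U, φ : [a,b] → ℝ be real analytic with g(t) = U(t)·e^{iφ(t)} for all t ∈ [a,b]. Then the set of zeros of f in [a,b] is finite, and |φ(b) − φ(a)|/π < N + 1, where N is the number of points t ∈ [a,b] with f(t) = 0. -/
open Complex Set

theorem phase_variation_counts_zeros
    (a b : ℝ) (hab : a < b) (f : ℝ → ℝ) (g : ℝ → ℂ)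
    (hf : RealAnalyticOnIcc a b (fun t => (f t : ℂ)))
    (hg : RealAnalyticOnIcc a b g)
    (hfg : ∀ t ∈ Set.Icc a b, f t = (g t).re)
    (hne : ¬ ∀ t ∈ Set.Icc a b, f t = 0)
    (U φ : ℝ → ℝ)
    (hU : RealAnalyticOnIcc a b (fun t => (U t : ℂ)))
    (hφ : RealAnalyticOnIcc a b (fun t => (φ t : ℂ)))
    (hrep : ∀ t ∈ Set.Icc a b, g t = (U t : ℂ) * Complex.exp (Complex.I * φ t)) :
    {t ∈ Set.Icc a b | f t = 0}.Finite ∧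
    |φ b - φ a| / Real.pi < {t ∈ Set.Icc a b | f t = 0}.ncard + 1 := by
  set S := {t ∈ Set.Icc a b | f t = 0} with hS
  -- f t = U t * cos (φ t) on [a,b]
  have hfcos : ∀ t ∈ Set.Icc a b, f t = U t * Real.cos (φ t) := by
    intro t ht
    have h1 : ((U t : ℂ) * Complex.exp (Complex.I * φ t))
        = (↑(U t * Real.cos (φ t)) : ℂ) + (↑(U t * Real.sin (φ t)) : ℂ) * Complex.I := by
      rw [mul_comm Complex.I, Complex.exp_mul_I]
      push_cast
      ring
    rw [hfg t ht, hrep t ht, h1]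
    simp only [Complex.add_re, Complex.mul_re, Complex.ofReal_re, Complex.ofReal_im,
      Complex.I_re, Complex.I_im]
    ring
  -- Finiteness of the zero set
  have hFin : S.Finite := by
    by_contra hinf
    have hinf' : S.Infinite := hinf
    obtain ⟨z₀, hz₀I, hacc⟩ := hinf'.exists_accPt_of_subset_isCompact isCompact_Icc
      (fun t ht => ht.1)
    obtain ⟨V, hVo, hVmem, F, hFa, hFf⟩ := hf
    -- z₀ is in the closure of zeros of F minus itself
    have hcl : z₀ ∈ closure (S \ {z₀}) := by
      rw [accPt_principal_iff_clusterPt] at hacc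
      exact mem_closure_iff_clusterPt.mpr hacc
    have hclC : (z₀ : ℂ) ∈ closure ({z : ℂ | F z = 0} \ {(z₀ : ℂ)}) := by
      have h1 : (z₀ : ℂ) ∈ closure ((fun t : ℝ => (t : ℂ)) '' (S \ {z₀})) :=
        image_closure_subset_closure_image Complex.continuous_ofReal ⟨z₀, hcl, rfl⟩
      refine closure_mono ?_ h1
      rintro z ⟨t, ⟨⟨htI, htf⟩, htne⟩, rfl⟩
      refine ⟨?_, ?_⟩
      · show F (t : ℂ) = 0
        rw [hFf t htI]; simp [htf]
      · simp only [mem_singleton_iff]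
        exact fun h => htne (by exact_mod_cast h)
    -- the image of [a,b] lies in one connected component of V
    set K : Set ℂ := (fun t : ℝ => (t : ℂ)) '' Set.Icc a b with hK
    have hz₀K : (z₀ : ℂ) ∈ K := ⟨z₀, hz₀I, rfl⟩
    have hKV : K ⊆ V := by rintro z ⟨t, ht, rfl⟩; exact hVmem t ht
    have hKconn : IsPreconnected K :=
      (isPreconnected_Icc).image _ Complex.continuous_ofReal.continuousOn
    set W := connectedComponentIn V (z₀ : ℂ) with hW
    have hKW : K ⊆ W := hKconn.subset_connectedComponentIn hz₀K hKV
    have hz₀W : (z₀ : ℂ) ∈ W := hKW hz₀K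
    have hzero : Set.EqOn F 0 W :=
      (hFa.mono (connectedComponentIn_subset V _)).eqOn_zero_of_preconnected_of_mem_closure
        isPreconnected_connectedComponentIn hz₀W hclC
    refine hne fun t ht => ?_
    have h0 : F (t : ℂ) = 0 := hzero (hKW ⟨t, ht, rfl⟩)
    have h2 : ((f t : ℂ)) = 0 := (hFf t ht).symm.trans h0
    exact_mod_cast h2
  refine ⟨hFin, ?_⟩
  -- continuity of φ on [a,b]
  obtain ⟨Vφ, hVφo, hVφmem, Φ, hΦa, hΦf⟩ := hφ
  have hφc : ContinuousOn φ (Set.Icc a b) := by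
    have h1 : ContinuousOn (fun t : ℝ => (Φ (t : ℂ)).re) (Set.Icc a b) := by
      apply Complex.continuous_re.comp_continuousOn
      exact hΦa.continuousOn.comp Complex.continuous_ofReal.continuousOn
        (fun t ht => hVφmem t ht)
    refine h1.congr fun t ht => ?_
    have := hΦf t ht
    simp [this]
  set N := S.ncard with hN
  by_contra hlt
  push_neg at hlt
  have hπ : (0 : ℝ) < Real.pi := Real.pi_pos
  have hL : ((N : ℝ) + 1) * Real.pi ≤ |φ b - φ a| := by
    rwa [← le_div_iff₀ hπ]
  -- grid points
  set c := min (φ a) (φ b) with hc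
  set d := max (φ a) (φ b) with hd
  have hdc : d - c = |φ b - φ a| := by
    rw [hc, hd]
    rcases le_total (φ a) (φ b) with h | h
    · rw [min_eq_left h, max_eq_right h, _root_.abs_of_nonneg (by linarith : (0:ℝ) ≤ φ b - φ a)]
    · rw [min_eq_right h, max_eq_left h,
        _root_.abs_of_nonpos (by linarith : φ b - φ a ≤ 0)]
      ring
  set k₀ : ℤ := ⌈(c - Real.pi / 2) / Real.pi⌉ with hk₀
  have hk₀ge : c ≤ Real.pi / 2 + (k₀ : ℝ) * Real.pi := by
    have := Int.le_ceil ((c - Real.pi / 2) / Real.pi)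
    have h2 : c - Real.pi / 2 ≤ (k₀ : ℝ) * Real.pi := by
      rw [div_le_iff₀ hπ] at this
      linarith
    linarith
  have hk₀lt : Real.pi / 2 + (k₀ : ℝ) * Real.pi < c + Real.pi := by
    have := Int.ceil_lt_add_one ((c - Real.pi / 2) / Real.pi)
    have h2 : (k₀ : ℝ) * Real.pi < c - Real.pi / 2 + Real.pi := by
      have h3 : (k₀ : ℝ) < (c - Real.pi / 2) / Real.pi + 1 := this
      calc (k₀ : ℝ) * Real.pi < ((c - Real.pi / 2) / Real.pi + 1) * Real.pi := by
            exact mul_lt_mul_of_pos_right h3 hπ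
        _ = c - Real.pi / 2 + Real.pi := by field_simp
    linarith
  -- for each j ≤ N, find a zero
  have hIVT : uIcc (φ a) (φ b) ⊆ φ '' Set.Icc a b := by
    have := intermediate_value_uIcc (f := φ) (a := a) (b := b)
      (by rwa [uIcc_of_le hab.le])
    rwa [uIcc_of_le hab.le] at this
  have hexists : ∀ j : Fin (N + 1), ∃ t ∈ Set.Icc a b,
      φ t = Real.pi / 2 + ((k₀ + (j : ℕ) : ℤ) : ℝ) * Real.pi := by
    intro j
    have hj1 : (j : ℕ) ≤ N := Nat.lt_succ_iff.mp j.isLt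
    have hId : Set.uIcc (φ a) (φ b) = Set.Icc c d := rfl
    have hθ : Real.pi / 2 + ((k₀ + (j : ℕ) : ℤ) : ℝ) * Real.pi ∈ uIcc (φ a) (φ b) := by
      rw [hId]
      push_cast
      constructor
      · have hj0 : (0:ℝ) ≤ ((j:ℕ):ℝ) := Nat.cast_nonneg _
        nlinarith [hπ, hk₀ge]
      · have hjN : ((j : ℕ) : ℝ) ≤ (N : ℝ) := by exact_mod_cast hj1
        nlinarith [hπ, hk₀lt, hdc, hL]
    obtain ⟨t, ht, hφt⟩ := hIVT hθ
    exact ⟨t, ht, hφt⟩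
  choose t htI hφt using hexists
  have htS : ∀ j, t j ∈ S := by
    intro j
    refine ⟨htI j, ?_⟩
    rw [hfcos _ (htI j), hφt j]
    have : Real.cos (Real.pi / 2 + ((k₀ + (j : ℕ) : ℤ) : ℝ) * Real.pi) = 0 := by
      rw [Real.cos_add, Real.cos_pi_div_two, Real.sin_pi_div_two, Real.sin_int_mul_pi]
      ring
    rw [this, mul_zero]
  have htinj : Function.Injective t := by
    intro i j hij
    have : φ (t i) = φ (t j) := by rw [hij]
    rw [hφt i, hφt j] at this
    have h2 : ((k₀ + (i : ℕ) : ℤ) : ℝ) * Real.pi = ((k₀ + (j : ℕ) : ℤ) : ℝ) * Real.pi := by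
      linarith
    have h3 : (k₀ + (i : ℕ) : ℤ) = (k₀ + (j : ℕ) : ℤ) := by
      have := mul_right_cancel₀ hπ.ne' h2
      exact_mod_cast this
    have : (i : ℕ) = (j : ℕ) := by omega
    exact Fin.ext this
  have hcard : N + 1 ≤ N := by
    have hsub : Set.range t ⊆ S := by rintro x ⟨j, rfl⟩; exact htS j
    have h1 : (Set.range t).ncard = N + 1 := by
      rw [← Set.image_univ, Set.ncard_image_of_injective _ htinj, Set.ncard_univ,
        Nat.card_eq_fintype_card, Fintype.card_fin]
    have := Set.ncard_le_ncard hsub hFin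
    rw [h1] at this
    exact this
  omega
end

section
/- Let a < b be real numbers and let f, g : [a,b] → ℂ be real analytic with |f(t) − g(t)| < |f(t)| for all t ∈ [a,b]. Then f and g do not vanish on [a,b]; moreover, for every real analytic α : [a,b] → ℝ with f(t) = |f(t)|·e^{iα(t)} there exists a real analytic β : [a,b] → ℝ with g(t) = |g(t)|·e^{iβ(t)} such that |α(t) − β(t)| < π for all t ∈ [a,b]; in particular | (α(b) − α(a))/π − (β(b) − β(a))/π | < 2. -/
open Complex Set

lemma conj_reflect_hasDerivAt {Ψ : ℂ → ℂ} {z : ℂ} {d : ℂ}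
    (h : HasDerivAt Ψ d ((starRingEnd ℂ) z)) :
    HasDerivAt (fun w => (starRingEnd ℂ) (Ψ ((starRingEnd ℂ) w))) ((starRingEnd ℂ) d) z := by
  rw [hasDerivAt_iff_tendsto_slope] at h ⊢
  have hconj : Filter.Tendsto (starRingEnd ℂ) (nhdsWithin z {z}ᶜ)
      (nhdsWithin ((starRingEnd ℂ) z) {(starRingEnd ℂ) z}ᶜ) := by
    apply Filter.Tendsto.inf
    · exact (Complex.continuous_conj.tendsto z)
    · apply Filter.tendsto_principal_principal.2
      intro x hx
      simp only [Set.mem_compl_iff, Set.mem_singleton_iff] at *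
      exact fun hc => hx (by simpa using congrArg (starRingEnd ℂ) hc)
  have := (Complex.continuous_conj.tendsto d).comp (h.comp hconj)
  apply this.congr
  intro x
  simp only [Function.comp_apply, slope_def_field]
  simp [map_div₀, map_sub]

lemma conj_reflect_analyticOnNhd {V : Set ℂ} (hV : IsOpen V) {Ψ : ℂ → ℂ}
    (hΨ : AnalyticOnNhd ℂ Ψ V) :
    AnalyticOnNhd ℂ (fun w => (starRingEnd ℂ) (Ψ ((starRingEnd ℂ) w)))
      ((starRingEnd ℂ) ⁻¹' V) := by
  have hopen : IsOpen ((starRingEnd ℂ) ⁻¹' V) := hV.preimage Complex.continuous_conj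
  apply DifferentiableOn.analyticOnNhd _ hopen
  intro z hz
  have hd : HasDerivAt Ψ (deriv Ψ ((starRingEnd ℂ) z)) ((starRingEnd ℂ) z) :=
    ((hΨ _ hz).differentiableAt).hasDerivAt
  exact (conj_reflect_hasDerivAt hd).differentiableAt.differentiableWithinAt

theorem phases_of_close_functions
    (a b : ℝ) (hab : a < b) (f g : ℝ → ℂ)
    (hf : RealAnalyticOnIcc a b f)
    (hg : RealAnalyticOnIcc a b g)
    (hclose : ∀ t ∈ Set.Icc a b, ‖f t - g t‖ < ‖f t‖) :
    (∀ t ∈ Set.Icc a b, f t ≠ 0 ∧ g t ≠ 0) ∧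
    ∀ α : ℝ → ℝ,
      RealAnalyticOnIcc a b (fun t => (α t : ℂ)) →
      (∀ t ∈ Set.Icc a b, f t = (‖f t‖ : ℂ) * Complex.exp (Complex.I * α t)) →
      ∃ β : ℝ → ℝ,
        RealAnalyticOnIcc a b (fun t => (β t : ℂ)) ∧
        (∀ t ∈ Set.Icc a b, g t = (‖g t‖ : ℂ) * Complex.exp (Complex.I * β t)) ∧
        (∀ t ∈ Set.Icc a b, |α t - β t| < Real.pi) ∧
        |(α b - α a) / Real.pi - (β b - β a) / Real.pi| < 2 := by
  -- nonvanishing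
  have hfne : ∀ t ∈ Set.Icc a b, f t ≠ 0 := by
    intro t ht hft
    have := hclose t ht
    rw [hft] at this
    simp at this
    exact (norm_nonneg _).not_gt this
  have hgne : ∀ t ∈ Set.Icc a b, g t ≠ 0 := by
    intro t ht hgt
    have := hclose t ht
    rw [hgt] at this
    simp at this
  -- positive real part of the quotient
  have hre : ∀ t ∈ Set.Icc a b, 0 < (g t / f t).re := by
    intro t ht
    have hf0 := hfne t ht
    have hg0 := hgne t ht
    have h1 : ‖1 - g t / f t‖ < 1 := by
      have : (1 : ℂ) - g t / f t = (f t - g t) / f t := by field_simp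
      rw [this, norm_div, div_lt_one (norm_pos_iff.2 hf0)]
      exact hclose t ht
    set w : ℂ := g t / f t with hw
    have hw0 : w ≠ 0 := div_ne_zero hg0 hf0
    have h2 : ‖1 - w‖ ^ 2 < 1 := by nlinarith [norm_nonneg (1 - w)]
    rw [Complex.sq_norm, Complex.normSq_apply] at h2
    simp only [Complex.sub_re, Complex.sub_im, Complex.one_re, Complex.one_im] at h2
    have h3 : w.re ^ 2 + w.im ^ 2 ≠ 0 := by
      intro hc
      apply hw0
      have h4 : w.re = 0 ∧ w.im = 0 := by constructor <;> nlinarith [sq_nonneg w.re, sq_nonneg w.im]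
      exact Complex.ext h4.1 h4.2
    nlinarith [sq_nonneg w.re, sq_nonneg w.im]
  refine ⟨fun t ht => ⟨hfne t ht, hgne t ht⟩, ?_⟩
  intro α hα hfα
  obtain ⟨U₁, hU₁, hmem₁, F, hF, hFf⟩ := hf
  obtain ⟨U₂, hU₂, hmem₂, G, hG, hGg⟩ := hg
  obtain ⟨U₃, hU₃, hmem₃, A, hA, hAα⟩ := hα
  -- the open set where everything is nice
  set V : Set ℂ := {z | z ∈ U₁ ∧ z ∈ U₂ ∧ z ∈ U₃ ∧ F z ≠ 0 ∧ G z / F z ∈ slitPlane}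
    with hVdef
  have hVopen : IsOpen V := by
    rw [isOpen_iff_mem_nhds]
    intro z hz
    obtain ⟨hz1, hz2, hz3, hz4, hz5⟩ := hz
    have hFc : ContinuousAt F z := (hF z hz1).continuousAt
    have hGc : ContinuousAt G z := (hG z hz2).continuousAt
    have hne : ∀ᶠ w in nhds z, F w ≠ 0 := hFc.eventually_ne hz4
    have hslit : ∀ᶠ w in nhds z, G w / F w ∈ slitPlane :=
      (hGc.div hFc hz4).eventually_mem (isOpen_slitPlane.mem_nhds hz5)
    filter_upwards [hU₁.mem_nhds hz1, hU₂.mem_nhds hz2, hU₃.mem_nhds hz3, hne, hslit] with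
      w h1 h2 h3 h4 h5
    exact ⟨h1, h2, h3, h4, h5⟩
  have hVmem : ∀ t ∈ Set.Icc a b, (t : ℂ) ∈ V := by
    intro t ht
    refine ⟨hmem₁ t ht, hmem₂ t ht, hmem₃ t ht, ?_, ?_⟩
    · rw [hFf t ht]; exact hfne t ht
    · rw [hFf t ht, hGg t ht]
      exact Complex.mem_slitPlane_iff.2 (Or.inl (hre t ht))
  -- Ψ = log (G/F) analytic on V
  set Ψ : ℂ → ℂ := fun z => Complex.log (G z / F z) with hΨdef
  have hΨ : AnalyticOnNhd ℂ Ψ V := by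
    intro z hz
    obtain ⟨hz1, hz2, hz3, hz4, hz5⟩ := hz
    exact ((hG z hz2).div (hF z hz1) hz4).clog hz5
  -- the reflected function
  set Ψc : ℂ → ℂ := fun w => (starRingEnd ℂ) (Ψ ((starRingEnd ℂ) w)) with hΨcdef
  have hΨc : AnalyticOnNhd ℂ Ψc ((starRingEnd ℂ) ⁻¹' V) :=
    conj_reflect_analyticOnNhd hVopen hΨ
  set W : Set ℂ := (U₃ ∩ V) ∩ ((starRingEnd ℂ) ⁻¹' V) with hWdef
  have hWopen : IsOpen W :=
    ((hU₃.inter hVopen).inter (hVopen.preimage Complex.continuous_conj))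
  have hWmem : ∀ t ∈ Set.Icc a b, (t : ℂ) ∈ W := by
    intro t ht
    refine ⟨⟨hmem₃ t ht, hVmem t ht⟩, ?_⟩
    simp only [Set.mem_preimage, Complex.conj_ofReal]
    exact hVmem t ht
  -- the extension B of β
  set B : ℂ → ℂ := fun z => A z + (Ψ z - Ψc z) / (2 * Complex.I) with hBdef
  have hB : AnalyticOnNhd ℂ B W := by
    intro z hz
    obtain ⟨⟨hz3, hzV⟩, hzC⟩ := hz
    exact (hA z hz3).add (((hΨ z hzV).sub (hΨc z hzC)).div analyticAt_const (by
      simp [Complex.I_ne_zero]))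
  -- β itself
  set β : ℝ → ℝ := fun t => α t + (Complex.log (g t / f t)).im with hβdef
  have hBβ : ∀ t ∈ Set.Icc a b, B (t : ℂ) = (β t : ℂ) := by
    intro t ht
    have h1 : Ψ (t : ℂ) = Complex.log (g t / f t) := by
      simp only [hΨdef, hFf t ht, hGg t ht]
    have h2 : Ψc (t : ℂ) = (starRingEnd ℂ) (Complex.log (g t / f t)) := by
      simp only [hΨcdef, Complex.conj_ofReal, h1]
    rw [hBdef]
    simp only [h1, h2, hAα t ht]
    rw [Complex.sub_conj]
    push_cast
    rw [hβdef]
    have : (2 : ℂ) * Complex.I ≠ 0 := by simp [Complex.I_ne_zero]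
    field_simp
    push_cast
    ring
  have hβeq : ∀ t ∈ Set.Icc a b, g t = (‖g t‖ : ℂ) * Complex.exp (Complex.I * β t) := by
    intro t ht
    have hf0 := hfne t ht
    have hg0 := hgne t ht
    set w : ℂ := g t / f t with hw
    have hw0 : w ≠ 0 := div_ne_zero hg0 hf0
    have habs : ‖w‖ = ‖g t‖ / ‖f t‖ := norm_div _ _
    have harg : (‖w‖ : ℂ) * Complex.exp (w.arg * Complex.I) = w :=
      Complex.norm_mul_exp_arg_mul_I w
    have hβt : (β t : ℂ) = (α t : ℂ) + (w.arg : ℂ) := by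
      simp only [hβdef]; rw [Complex.ofReal_add, Complex.log_im, ← hw]
    have hgw : g t = w * f t := by rw [hw, div_mul_cancel₀ _ hf0]
    have hfabs : (‖f t‖ : ℂ) ≠ 0 := by simpa using hf0
    calc g t = w * f t := hgw
      _ = (‖w‖ : ℂ) * Complex.exp (w.arg * Complex.I) * f t := by rw [harg]
      _ = (‖w‖ : ℂ) * Complex.exp (w.arg * Complex.I)
            * ((‖f t‖ : ℂ) * Complex.exp (Complex.I * α t)) := by rw [← hfα t ht]
      _ = (‖g t‖ : ℂ) * Complex.exp (Complex.I * β t) := by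
          rw [hβt, habs, mul_add, Complex.exp_add, mul_comm Complex.I (w.arg : ℂ)]
          push_cast
          field_simp
  have hdiff : ∀ t ∈ Set.Icc a b, |α t - β t| < Real.pi := by
    intro t ht
    have hre' := hre t ht
    have : |(g t / f t).arg| < Real.pi / 2 :=
      Complex.abs_arg_lt_pi_div_two_iff.2 (Or.inl hre')
    have hπ : Real.pi / 2 < Real.pi := by linarith [Real.pi_pos]
    have hαβ : α t - β t = -((g t / f t).arg) := by
      simp only [hβdef, Complex.log_im]; ring
    rw [hαβ, abs_neg]
    linarith
  refine ⟨β, ⟨W, hWopen, hWmem, B, hB, hBβ⟩, hβeq, hdiff, ?_⟩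
  have ha : a ∈ Set.Icc a b := ⟨le_refl a, le_of_lt hab⟩
  have hb : b ∈ Set.Icc a b := ⟨le_of_lt hab, le_refl b⟩
  have h1 := hdiff a ha
  have h2 := hdiff b hb
  have hπ := Real.pi_pos
  have : (α b - α a) / Real.pi - (β b - β a) / Real.pi
      = ((α b - β b) - (α a - β a)) / Real.pi := by ring
  rw [this, abs_div, abs_of_pos hπ, div_lt_iff₀ hπ]
  calc |α b - β b - (α a - β a)| ≤ |α b - β b| + |α a - β a| := abs_sub _ _
    _ < Real.pi + Real.pi := add_lt_add h2 h1
    _ = 2 * Real.pi := by ring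
end
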